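/- arXiv:2304.11481 — 8 statements merged into one kernel-verified Lean document; each statement's English description precedes it below -/
import Mathlib

section
/- For every set Γ ∪ {φ} of propositional formulas, Γ ⊢_Ciore φ if and only if Γ ⊨_{M_e} φ; that is, the Hilbert calculus Ciore is sound and complete with respect to the three-valued matrix M_e. -/
inductive Fm : Type
  | var : ℕ → Fm
  | and : Fm → Fm → Fm
  | or : Fm → Fm → Fm
  | imp : Fm → Fm → Fm
  | neg : Fm → Fm
  | cons : Fm → Fm
  deriving DecidableEq

inductive V3 : Type
  | zero : V3
  | half : V3
  | one : V3
  deriving DecidableEq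

def vand : V3 → V3 → V3
  | V3.zero, _ => V3.zero
  | _, V3.zero => V3.zero
  | V3.half, V3.half => V3.half
  | _, _ => V3.one

def vor : V3 → V3 → V3
  | V3.zero, V3.zero => V3.zero
  | V3.half, V3.half => V3.half
  | _, _ => V3.one

def vimp : V3 → V3 → V3
  | V3.zero, _ => V3.one
  | _, V3.zero => V3.zero
  | V3.half, V3.half => V3.half
  | _, _ => V3.one

def vneg : V3 → V3
  | V3.zero => V3.one
  | V3.half => V3.half
  | V3.one => V3.zero

def vcons : V3 → V3
  | V3.half => V3.zero
  | _ => V3.one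

/-- Designated values of the matrix M_e : D = {½, 1}. -/
def Des (x : V3) : Prop := x = V3.half ∨ x = V3.one

/-- `α ↔ β` abbreviates `(α → β) ∧ (β → α)`. -/
def fiff (α β : Fm) : Fm := Fm.and (Fm.imp α β) (Fm.imp β α)

/-- A valuation in the matrix M_e : a function commuting with all connectives. -/
def IsVal (v : Fm → V3) : Prop :=
  (∀ α β, v (Fm.and α β) = vand (v α) (v β)) ∧
  (∀ α β, v (Fm.or α β) = vor (v α) (v β)) ∧
  (∀ α β, v (Fm.imp α β) = vimp (v α) (v β)) ∧
  (∀ α, v (Fm.neg α) = vneg (v α)) ∧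
  (∀ α, v (Fm.cons α) = vcons (v α))

/-- A valuation satisfies a sequent Γ ⇒ Δ. -/
def SatSeqP (v : Fm → V3) (Γ Δ : Finset Fm) : Prop :=
  (∃ γ ∈ Γ, ¬ Des (v γ)) ∨ (∃ δ ∈ Δ, Des (v δ))

/-- A sequent is valid in M_e if every valuation satisfies it. -/
def ValidSeqP (Γ Δ : Finset Fm) : Prop :=
  ∀ v : Fm → V3, IsVal v → SatSeqP v Γ Δ

/-- The Hilbert calculus Ciore over a set Γ of premises. -/
inductive HCiore (Γ : Set Fm) : Fm → Prop
  | prem {φ : Fm} : φ ∈ Γ → HCiore Γ φ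
  | ax1 (α β : Fm) : HCiore Γ (Fm.imp α (Fm.imp β α))
  | ax2 (α β γ : Fm) :
      HCiore Γ (Fm.imp (Fm.imp α (Fm.imp β γ)) (Fm.imp (Fm.imp α β) (Fm.imp α γ)))
  | ax3 (α β : Fm) : HCiore Γ (Fm.imp α (Fm.imp β (Fm.and α β)))
  | ax4 (α β : Fm) : HCiore Γ (Fm.imp (Fm.and α β) α)
  | ax5 (α β : Fm) : HCiore Γ (Fm.imp (Fm.and α β) β)
  | ax6 (α β : Fm) : HCiore Γ (Fm.imp α (Fm.or α β))
  | ax7 (α β : Fm) : HCiore Γ (Fm.imp β (Fm.or α β))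
  | ax8 (α β γ : Fm) :
      HCiore Γ (Fm.imp (Fm.imp α γ) (Fm.imp (Fm.imp β γ) (Fm.imp (Fm.or α β) γ)))
  | ax9 (α β : Fm) : HCiore Γ (Fm.or (Fm.imp α β) α)
  | ax10 (α : Fm) : HCiore Γ (Fm.or α (Fm.neg α))
  | bc1 (α β : Fm) : HCiore Γ (Fm.imp (Fm.cons α) (Fm.imp α (Fm.imp (Fm.neg α) β)))
  | ci (α : Fm) : HCiore Γ (Fm.imp (Fm.neg (Fm.cons α)) (Fm.and α (Fm.neg α)))
  | cf (α : Fm) : HCiore Γ (fiff (Fm.neg (Fm.neg α)) α)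
  | co1 (α β : Fm) : HCiore Γ (fiff (Fm.or (Fm.cons α) (Fm.cons β)) (Fm.cons (Fm.and α β)))
  | co2 (α β : Fm) : HCiore Γ (fiff (Fm.or (Fm.cons α) (Fm.cons β)) (Fm.cons (Fm.or α β)))
  | co3 (α β : Fm) : HCiore Γ (fiff (Fm.or (Fm.cons α) (Fm.cons β)) (Fm.cons (Fm.imp α β)))
  | mp {α β : Fm} : HCiore Γ (Fm.imp α β) → HCiore Γ α → HCiore Γ β

-- AUX START
instance : Fintype V3 := ⟨⟨{V3.zero, V3.half, V3.one}, by decide⟩, by intro x; cases x <;> decide⟩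

instance (x : V3) : Decidable (Des x) := by unfold Des; infer_instance

theorem soundness {Γ : Set Fm} {φ : Fm} (h : HCiore Γ φ) :
    ∀ v : Fm → V3, IsVal v → (∀ γ ∈ Γ, Des (v γ)) → Des (v φ) := by
  intro v hv hΓ
  obtain ⟨h1, h2, h3, h4, h5⟩ := hv
  induction h with
  | prem hφ => exact hΓ _ hφ
  | mp _ _ ih1 ih2 =>
      rw [h3] at ih1
      exact (by decide : ∀ x y : V3, Des (vimp x y) → Des x → Des y) _ _ ih1 ih2
  | ax1 α β =>
      simp only [h3]
      exact (by decide : ∀ x y : V3, Des (vimp x (vimp y x))) _ _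
  | ax2 α β γ =>
      simp only [h3]
      exact (by decide : ∀ x y z : V3,
        Des (vimp (vimp x (vimp y z)) (vimp (vimp x y) (vimp x z)))) _ _ _
  | ax3 α β =>
      simp only [h1, h3]
      exact (by decide : ∀ x y : V3, Des (vimp x (vimp y (vand x y)))) _ _
  | ax4 α β =>
      simp only [h1, h3]
      exact (by decide : ∀ x y : V3, Des (vimp (vand x y) x)) _ _
  | ax5 α β =>
      simp only [h1, h3]
      exact (by decide : ∀ x y : V3, Des (vimp (vand x y) y)) _ _
  | ax6 α β =>
      simp only [h2, h3]
      exact (by decide : ∀ x y : V3, Des (vimp x (vor x y))) _ _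
  | ax7 α β =>
      simp only [h2, h3]
      exact (by decide : ∀ x y : V3, Des (vimp y (vor x y))) _ _
  | ax8 α β γ =>
      simp only [h2, h3]
      exact (by decide : ∀ x y z : V3,
        Des (vimp (vimp x z) (vimp (vimp y z) (vimp (vor x y) z)))) _ _ _
  | ax9 α β =>
      simp only [h2, h3]
      exact (by decide : ∀ x y : V3, Des (vor (vimp x y) x)) _ _
  | ax10 α =>
      simp only [h2, h4]
      exact (by decide : ∀ x : V3, Des (vor x (vneg x))) _
  | bc1 α β =>
      simp only [h3, h4, h5]
      exact (by decide : ∀ x y : V3, Des (vimp (vcons x) (vimp x (vimp (vneg x) y)))) _ _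
  | ci α =>
      simp only [h1, h3, h4, h5]
      exact (by decide : ∀ x : V3, Des (vimp (vneg (vcons x)) (vand x (vneg x)))) _
  | cf α =>
      simp only [fiff, h1, h3, h4]
      exact (by decide : ∀ x : V3,
        Des (vand (vimp (vneg (vneg x)) x) (vimp x (vneg (vneg x))))) _
  | co1 α β =>
      simp only [fiff, h1, h2, h3, h5]
      exact (by decide : ∀ x y : V3,
        Des (vand (vimp (vor (vcons x) (vcons y)) (vcons (vand x y)))
          (vimp (vcons (vand x y)) (vor (vcons x) (vcons y))))) _ _
  | co2 α β =>
      simp only [fiff, h1, h2, h3, h5]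
      exact (by decide : ∀ x y : V3,
        Des (vand (vimp (vor (vcons x) (vcons y)) (vcons (vor x y)))
          (vimp (vcons (vor x y)) (vor (vcons x) (vcons y))))) _ _
  | co3 α β =>
      simp only [fiff, h1, h2, h3, h5]
      exact (by decide : ∀ x y : V3,
        Des (vand (vimp (vor (vcons x) (vcons y)) (vcons (vimp x y)))
          (vimp (vcons (vimp x y)) (vor (vcons x) (vcons y))))) _ _

theorem hc_id (Γ : Set Fm) (α : Fm) : HCiore Γ (Fm.imp α α) :=
  ((HCiore.ax2 α (Fm.imp α α) α).mp (HCiore.ax1 α (Fm.imp α α))).mp (HCiore.ax1 α α)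

theorem deduction {Γ : Set Fm} {α β : Fm} (h : HCiore (insert α Γ) β) :
    HCiore Γ (Fm.imp α β) := by
  induction h with
  | prem hmem =>
      rcases hmem with rfl | hmem
      · exact hc_id Γ _
      · exact (HCiore.ax1 _ α).mp (HCiore.prem hmem)
  | mp _ _ ih1 ih2 => exact ((HCiore.ax2 _ _ _).mp ih1).mp ih2
  | ax1 a b => exact (HCiore.ax1 _ α).mp (HCiore.ax1 a b)
  | ax2 a b c => exact (HCiore.ax1 _ α).mp (HCiore.ax2 a b c)
  | ax3 a b => exact (HCiore.ax1 _ α).mp (HCiore.ax3 a b)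
  | ax4 a b => exact (HCiore.ax1 _ α).mp (HCiore.ax4 a b)
  | ax5 a b => exact (HCiore.ax1 _ α).mp (HCiore.ax5 a b)
  | ax6 a b => exact (HCiore.ax1 _ α).mp (HCiore.ax6 a b)
  | ax7 a b => exact (HCiore.ax1 _ α).mp (HCiore.ax7 a b)
  | ax8 a b c => exact (HCiore.ax1 _ α).mp (HCiore.ax8 a b c)
  | ax9 a b => exact (HCiore.ax1 _ α).mp (HCiore.ax9 a b)
  | ax10 a => exact (HCiore.ax1 _ α).mp (HCiore.ax10 a)
  | bc1 a b => exact (HCiore.ax1 _ α).mp (HCiore.bc1 a b)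
  | ci a => exact (HCiore.ax1 _ α).mp (HCiore.ci a)
  | cf a => exact (HCiore.ax1 _ α).mp (HCiore.cf a)
  | co1 a b => exact (HCiore.ax1 _ α).mp (HCiore.co1 a b)
  | co2 a b => exact (HCiore.ax1 _ α).mp (HCiore.co2 a b)
  | co3 a b => exact (HCiore.ax1 _ α).mp (HCiore.co3 a b)

theorem hc_mono {Γ Δ : Set Fm} (hsub : Γ ⊆ Δ) {φ : Fm} (h : HCiore Γ φ) : HCiore Δ φ := by
  induction h with
  | prem hm => exact HCiore.prem (hsub hm)
  | mp _ _ ih1 ih2 => exact ih1.mp ih2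
  | ax1 a b => exact HCiore.ax1 a b
  | ax2 a b c => exact HCiore.ax2 a b c
  | ax3 a b => exact HCiore.ax3 a b
  | ax4 a b => exact HCiore.ax4 a b
  | ax5 a b => exact HCiore.ax5 a b
  | ax6 a b => exact HCiore.ax6 a b
  | ax7 a b => exact HCiore.ax7 a b
  | ax8 a b c => exact HCiore.ax8 a b c
  | ax9 a b => exact HCiore.ax9 a b
  | ax10 a => exact HCiore.ax10 a
  | bc1 a b => exact HCiore.bc1 a b
  | ci a => exact HCiore.ci a
  | cf a => exact HCiore.cf a
  | co1 a b => exact HCiore.co1 a b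
  | co2 a b => exact HCiore.co2 a b
  | co3 a b => exact HCiore.co3 a b

theorem hc_fin {Γ : Set Fm} {φ : Fm} (h : HCiore Γ φ) :
    ∃ S : Finset Fm, ↑S ⊆ Γ ∧ HCiore (↑S : Set Fm) φ := by
  induction h with
  | prem hm =>
      exact ⟨{_}, by simpa using hm, HCiore.prem (by simp)⟩
  | mp _ _ ih1 ih2 =>
      obtain ⟨S1, hS1, hd1⟩ := ih1
      obtain ⟨S2, hS2, hd2⟩ := ih2
      refine ⟨S1 ∪ S2, ?_, ?_⟩
      · rw [Finset.coe_union]; exact Set.union_subset hS1 hS2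
      · have e1 : HCiore (↑(S1 ∪ S2) : Set Fm) _ :=
          hc_mono (by rw [Finset.coe_union]; exact Set.subset_union_left) hd1
        have e2 : HCiore (↑(S1 ∪ S2) : Set Fm) _ :=
          hc_mono (by rw [Finset.coe_union]; exact Set.subset_union_right) hd2
        exact e1.mp e2
  | ax1 a b => exact ⟨∅, by simp, HCiore.ax1 a b⟩
  | ax2 a b c => exact ⟨∅, by simp, HCiore.ax2 a b c⟩
  | ax3 a b => exact ⟨∅, by simp, HCiore.ax3 a b⟩
  | ax4 a b => exact ⟨∅, by simp, HCiore.ax4 a b⟩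
  | ax5 a b => exact ⟨∅, by simp, HCiore.ax5 a b⟩
  | ax6 a b => exact ⟨∅, by simp, HCiore.ax6 a b⟩
  | ax7 a b => exact ⟨∅, by simp, HCiore.ax7 a b⟩
  | ax8 a b c => exact ⟨∅, by simp, HCiore.ax8 a b c⟩
  | ax9 a b => exact ⟨∅, by simp, HCiore.ax9 a b⟩
  | ax10 a => exact ⟨∅, by simp, HCiore.ax10 a⟩
  | bc1 a b => exact ⟨∅, by simp, HCiore.bc1 a b⟩
  | ci a => exact ⟨∅, by simp, HCiore.ci a⟩
  | cf a => exact ⟨∅, by simp, HCiore.cf a⟩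
  | co1 a b => exact ⟨∅, by simp, HCiore.co1 a b⟩
  | co2 a b => exact ⟨∅, by simp, HCiore.co2 a b⟩
  | co3 a b => exact ⟨∅, by simp, HCiore.co3 a b⟩

theorem finset_subset_chain {c : Set (Set Fm)} (hc : IsChain (· ⊆ ·) c) (hne : c.Nonempty)
    (S : Finset Fm) : ↑S ⊆ ⋃₀ c → ∃ t ∈ c, ↑S ⊆ t := by
  induction S using Finset.induction with
  | empty =>
      intro _
      obtain ⟨t, ht⟩ := hne
      exact ⟨t, ht, by simp⟩
  | @insert a S ha ih =>
      intro h
      have hS : (↑S : Set Fm) ⊆ ⋃₀ c := by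
        intro x hx; exact h (by simp [hx])
      obtain ⟨t, htc, hts⟩ := ih hS
      obtain ⟨u, huc, hau⟩ := h (by simp : a ∈ (↑(insert a S) : Set Fm))
      rcases hc.total htc huc with h1 | h1
      · refine ⟨u, huc, ?_⟩
        intro x hx
        rcases Finset.mem_insert.1 (by exact_mod_cast hx) with rfl | hx'
        · exact hau
        · exact h1 (hts hx')
      · refine ⟨t, htc, ?_⟩
        intro x hx
        rcases Finset.mem_insert.1 (by exact_mod_cast hx) with rfl | hx'
        · exact h1 hau
        · exact hts hx'

section MaxTheory

variable {Δ : Set Fm} {φ : Fm}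

theorem mem_of_thm (hnd : ¬ HCiore Δ φ)
    (hmax : ∀ Δ', Δ ⊆ Δ' → ¬ HCiore Δ' φ → Δ' ⊆ Δ)
    {α : Fm} (h : HCiore Δ α) : α ∈ Δ := by
  by_cases h2 : HCiore (insert α Δ) φ
  · exact absurd ((deduction h2).mp h) hnd
  · exact hmax _ (Set.subset_insert _ _) h2 (Set.mem_insert _ _)

theorem imp_phi (hmax : ∀ Δ', Δ ⊆ Δ' → ¬ HCiore Δ' φ → Δ' ⊆ Δ)
    {α : Fm} (hα : α ∉ Δ) : HCiore Δ (Fm.imp α φ) := by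
  by_cases h2 : HCiore (insert α Δ) φ
  · exact deduction h2
  · exact absurd (hmax _ (Set.subset_insert _ _) h2 (Set.mem_insert _ _)) hα

theorem mem_mp (hnd : ¬ HCiore Δ φ)
    (hmax : ∀ Δ', Δ ⊆ Δ' → ¬ HCiore Δ' φ → Δ' ⊆ Δ)
    {α β : Fm} (h1 : Fm.imp α β ∈ Δ) (h2 : α ∈ Δ) : β ∈ Δ :=
  mem_of_thm hnd hmax ((HCiore.prem h1).mp (HCiore.prem h2))

theorem or_iff (hnd : ¬ HCiore Δ φ)
    (hmax : ∀ Δ', Δ ⊆ Δ' → ¬ HCiore Δ' φ → Δ' ⊆ Δ)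
    {α β : Fm} : Fm.or α β ∈ Δ ↔ α ∈ Δ ∨ β ∈ Δ := by
  constructor
  · intro h
    by_contra hcon
    push_neg at hcon
    exact hnd ((((HCiore.ax8 α β φ).mp (imp_phi hmax hcon.1)).mp
      (imp_phi hmax hcon.2)).mp (HCiore.prem h))
  · rintro (h | h)
    · exact mem_of_thm hnd hmax ((HCiore.ax6 α β).mp (HCiore.prem h))
    · exact mem_of_thm hnd hmax ((HCiore.ax7 α β).mp (HCiore.prem h))

theorem and_iff (hnd : ¬ HCiore Δ φ)
    (hmax : ∀ Δ', Δ ⊆ Δ' → ¬ HCiore Δ' φ → Δ' ⊆ Δ)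
    {α β : Fm} : Fm.and α β ∈ Δ ↔ α ∈ Δ ∧ β ∈ Δ := by
  constructor
  · intro h
    exact ⟨mem_of_thm hnd hmax ((HCiore.ax4 α β).mp (HCiore.prem h)),
      mem_of_thm hnd hmax ((HCiore.ax5 α β).mp (HCiore.prem h))⟩
  · rintro ⟨h1, h2⟩
    exact mem_of_thm hnd hmax (((HCiore.ax3 α β).mp (HCiore.prem h1)).mp (HCiore.prem h2))

theorem imp_iff (hnd : ¬ HCiore Δ φ)
    (hmax : ∀ Δ', Δ ⊆ Δ' → ¬ HCiore Δ' φ → Δ' ⊆ Δ)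
    {α β : Fm} : Fm.imp α β ∈ Δ ↔ (α ∉ Δ ∨ β ∈ Δ) := by
  constructor
  · intro h
    by_cases hα : α ∈ Δ
    · exact Or.inr (mem_mp hnd hmax h hα)
    · exact Or.inl hα
  · rintro (h | h)
    · have := mem_of_thm hnd hmax (HCiore.ax9 α β)
      rcases (or_iff hnd hmax).1 this with h1 | h1
      · exact h1
      · exact absurd h1 h
    · exact mem_of_thm hnd hmax ((HCiore.ax1 β α).mp (HCiore.prem h))

theorem neg_total (hnd : ¬ HCiore Δ φ)
    (hmax : ∀ Δ', Δ ⊆ Δ' → ¬ HCiore Δ' φ → Δ' ⊆ Δ)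
    {α : Fm} (hα : α ∉ Δ) : Fm.neg α ∈ Δ := by
  rcases (or_iff hnd hmax).1 (mem_of_thm hnd hmax (HCiore.ax10 α)) with h | h
  · exact absurd h hα
  · exact h

theorem iff_mem (hnd : ¬ HCiore Δ φ)
    (hmax : ∀ Δ', Δ ⊆ Δ' → ¬ HCiore Δ' φ → Δ' ⊆ Δ)
    {a b : Fm} (h : HCiore Δ (fiff a b)) : (a ∈ Δ ↔ b ∈ Δ) := by
  have h1 : HCiore Δ (Fm.imp a b) := (HCiore.ax4 _ _).mp h
  have h2 : HCiore Δ (Fm.imp b a) := (HCiore.ax5 _ _).mp h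
  exact ⟨fun ha => mem_of_thm hnd hmax (h1.mp (HCiore.prem ha)),
    fun hb => mem_of_thm hnd hmax (h2.mp (HCiore.prem hb))⟩

theorem dneg_iff (hnd : ¬ HCiore Δ φ)
    (hmax : ∀ Δ', Δ ⊆ Δ' → ¬ HCiore Δ' φ → Δ' ⊆ Δ)
    {α : Fm} : Fm.neg (Fm.neg α) ∈ Δ ↔ α ∈ Δ :=
  iff_mem hnd hmax (HCiore.cf α)

theorem cons_iff (hnd : ¬ HCiore Δ φ)
    (hmax : ∀ Δ', Δ ⊆ Δ' → ¬ HCiore Δ' φ → Δ' ⊆ Δ)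
    {α : Fm} : Fm.cons α ∈ Δ ↔ ¬ (α ∈ Δ ∧ Fm.neg α ∈ Δ) := by
  constructor
  · rintro h ⟨h1, h2⟩
    exact hnd ((((HCiore.bc1 α φ).mp (HCiore.prem h)).mp (HCiore.prem h1)).mp (HCiore.prem h2))
  · intro h
    by_contra hc
    have hn : Fm.neg (Fm.cons α) ∈ Δ := neg_total hnd hmax hc
    have := (and_iff hnd hmax).1 (mem_of_thm hnd hmax ((HCiore.ci α).mp (HCiore.prem hn)))
    exact h this

theorem cons_of_not_mem (hnd : ¬ HCiore Δ φ)
    (hmax : ∀ Δ', Δ ⊆ Δ' → ¬ HCiore Δ' φ → Δ' ⊆ Δ)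
    {α : Fm} (hα : α ∉ Δ) : Fm.cons α ∈ Δ :=
  (cons_iff hnd hmax).2 (fun h => hα h.1)

theorem neg_iff_of_mem (hnd : ¬ HCiore Δ φ)
    (hmax : ∀ Δ', Δ ⊆ Δ' → ¬ HCiore Δ' φ → Δ' ⊆ Δ)
    {α : Fm} (hα : α ∈ Δ) : (Fm.neg α ∈ Δ ↔ Fm.cons α ∉ Δ) := by
  rw [cons_iff hnd hmax]
  tauto

end MaxTheory

open Classical in
noncomputable def mval (Δ : Set Fm) (α : Fm) : V3 :=
  if α ∈ Δ then (if Fm.neg α ∈ Δ then V3.half else V3.one) else V3.zero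

section Valuation

variable {Δ : Set Fm} {φ : Fm}

theorem mval_zero {α : Fm} (h : α ∉ Δ) : mval Δ α = V3.zero := by
  simp [mval, h]

theorem mval_half (hnd : ¬ HCiore Δ φ)
    (hmax : ∀ Δ', Δ ⊆ Δ' → ¬ HCiore Δ' φ → Δ' ⊆ Δ)
    {α : Fm} (h : α ∈ Δ) (hc : Fm.cons α ∉ Δ) : mval Δ α = V3.half := by
  have hn : Fm.neg α ∈ Δ := (neg_iff_of_mem hnd hmax h).2 hc
  simp [mval, h, hn]

theorem mval_one (hnd : ¬ HCiore Δ φ)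
    (hmax : ∀ Δ', Δ ⊆ Δ' → ¬ HCiore Δ' φ → Δ' ⊆ Δ)
    {α : Fm} (h : α ∈ Δ) (hc : Fm.cons α ∈ Δ) : mval Δ α = V3.one := by
  have hn : Fm.neg α ∉ Δ := fun hn => (cons_iff hnd hmax).1 hc ⟨h, hn⟩
  simp [mval, h, hn]

theorem mval_cases (hnd : ¬ HCiore Δ φ)
    (hmax : ∀ Δ', Δ ⊆ Δ' → ¬ HCiore Δ' φ → Δ' ⊆ Δ) (α : Fm) :
    (mval Δ α = V3.zero ∧ α ∉ Δ ∧ Fm.cons α ∈ Δ) ∨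
    (mval Δ α = V3.half ∧ α ∈ Δ ∧ Fm.cons α ∉ Δ) ∨
    (mval Δ α = V3.one ∧ α ∈ Δ ∧ Fm.cons α ∈ Δ) := by
  by_cases h : α ∈ Δ
  · by_cases hc : Fm.cons α ∈ Δ
    · exact Or.inr (Or.inr ⟨mval_one hnd hmax h hc, h, hc⟩)
    · exact Or.inr (Or.inl ⟨mval_half hnd hmax h hc, h, hc⟩)
  · exact Or.inl ⟨mval_zero h, h, cons_of_not_mem hnd hmax h⟩

theorem des_mval {α : Fm} : Des (mval Δ α) ↔ α ∈ Δ := by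
  by_cases h : α ∈ Δ <;> by_cases hn : Fm.neg α ∈ Δ <;> simp [mval, h, hn, Des]

theorem isval_mval (hnd : ¬ HCiore Δ φ)
    (hmax : ∀ Δ', Δ ⊆ Δ' → ¬ HCiore Δ' φ → Δ' ⊆ Δ) : IsVal (mval Δ) := by
  refine ⟨?_, ?_, ?_, ?_, ?_⟩
  · -- and
    intro α β
    have hco : Fm.cons (Fm.and α β) ∈ Δ ↔ (Fm.cons α ∈ Δ ∨ Fm.cons β ∈ Δ) :=
      (iff_mem hnd hmax (HCiore.co1 α β)).symm.trans (or_iff hnd hmax)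
    rcases mval_cases hnd hmax α with ⟨ea, ha, hca⟩ | ⟨ea, ha, hca⟩ | ⟨ea, ha, hca⟩ <;>
      rcases mval_cases hnd hmax β with ⟨eb, hb, hcb⟩ | ⟨eb, hb, hcb⟩ | ⟨eb, hb, hcb⟩ <;>
      rw [ea, eb]
    · rw [mval_zero (fun hm => ha ((and_iff hnd hmax).1 hm).1)]; rfl
    · rw [mval_zero (fun hm => ha ((and_iff hnd hmax).1 hm).1)]; rfl
    · rw [mval_zero (fun hm => ha ((and_iff hnd hmax).1 hm).1)]; rfl
    · rw [mval_zero (fun hm => hb ((and_iff hnd hmax).1 hm).2)]; rfl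
    · rw [mval_half hnd hmax ((and_iff hnd hmax).2 ⟨ha, hb⟩)
        (fun hcm => ((hco.1 hcm).elim hca hcb))]; rfl
    · rw [mval_one hnd hmax ((and_iff hnd hmax).2 ⟨ha, hb⟩) (hco.2 (Or.inr hcb))]; rfl
    · rw [mval_zero (fun hm => hb ((and_iff hnd hmax).1 hm).2)]; rfl
    · rw [mval_one hnd hmax ((and_iff hnd hmax).2 ⟨ha, hb⟩) (hco.2 (Or.inl hca))]; rfl
    · rw [mval_one hnd hmax ((and_iff hnd hmax).2 ⟨ha, hb⟩) (hco.2 (Or.inl hca))]; rfl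
  · -- or
    intro α β
    have hco : Fm.cons (Fm.or α β) ∈ Δ ↔ (Fm.cons α ∈ Δ ∨ Fm.cons β ∈ Δ) :=
      (iff_mem hnd hmax (HCiore.co2 α β)).symm.trans (or_iff hnd hmax)
    rcases mval_cases hnd hmax α with ⟨ea, ha, hca⟩ | ⟨ea, ha, hca⟩ | ⟨ea, ha, hca⟩ <;>
      rcases mval_cases hnd hmax β with ⟨eb, hb, hcb⟩ | ⟨eb, hb, hcb⟩ | ⟨eb, hb, hcb⟩ <;>
      rw [ea, eb]
    · rw [mval_zero (fun hm => ((or_iff hnd hmax).1 hm).elim ha hb)]; rfl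
    · rw [mval_one hnd hmax ((or_iff hnd hmax).2 (Or.inr hb)) (hco.2 (Or.inl hca))]; rfl
    · rw [mval_one hnd hmax ((or_iff hnd hmax).2 (Or.inr hb)) (hco.2 (Or.inl hca))]; rfl
    · rw [mval_one hnd hmax ((or_iff hnd hmax).2 (Or.inl ha)) (hco.2 (Or.inr hcb))]; rfl
    · rw [mval_half hnd hmax ((or_iff hnd hmax).2 (Or.inl ha))
        (fun hcm => ((hco.1 hcm).elim hca hcb))]; rfl
    · rw [mval_one hnd hmax ((or_iff hnd hmax).2 (Or.inl ha)) (hco.2 (Or.inr hcb))]; rfl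
    · rw [mval_one hnd hmax ((or_iff hnd hmax).2 (Or.inl ha)) (hco.2 (Or.inl hca))]; rfl
    · rw [mval_one hnd hmax ((or_iff hnd hmax).2 (Or.inl ha)) (hco.2 (Or.inl hca))]; rfl
    · rw [mval_one hnd hmax ((or_iff hnd hmax).2 (Or.inl ha)) (hco.2 (Or.inl hca))]; rfl
  · -- imp
    intro α β
    have hco : Fm.cons (Fm.imp α β) ∈ Δ ↔ (Fm.cons α ∈ Δ ∨ Fm.cons β ∈ Δ) :=
      (iff_mem hnd hmax (HCiore.co3 α β)).symm.trans (or_iff hnd hmax)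
    rcases mval_cases hnd hmax α with ⟨ea, ha, hca⟩ | ⟨ea, ha, hca⟩ | ⟨ea, ha, hca⟩ <;>
      rcases mval_cases hnd hmax β with ⟨eb, hb, hcb⟩ | ⟨eb, hb, hcb⟩ | ⟨eb, hb, hcb⟩ <;>
      rw [ea, eb]
    · rw [mval_one hnd hmax ((imp_iff hnd hmax).2 (Or.inl ha)) (hco.2 (Or.inl hca))]; rfl
    · rw [mval_one hnd hmax ((imp_iff hnd hmax).2 (Or.inl ha)) (hco.2 (Or.inl hca))]; rfl
    · rw [mval_one hnd hmax ((imp_iff hnd hmax).2 (Or.inl ha)) (hco.2 (Or.inl hca))]; rfl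
    · rw [mval_zero (fun hm => ((imp_iff hnd hmax).1 hm).elim (fun h' => h' ha) hb)]; rfl
    · rw [mval_half hnd hmax ((imp_iff hnd hmax).2 (Or.inr hb))
        (fun hcm => ((hco.1 hcm).elim hca hcb))]; rfl
    · rw [mval_one hnd hmax ((imp_iff hnd hmax).2 (Or.inr hb)) (hco.2 (Or.inr hcb))]; rfl
    · rw [mval_zero (fun hm => ((imp_iff hnd hmax).1 hm).elim (fun h' => h' ha) hb)]; rfl
    · rw [mval_one hnd hmax ((imp_iff hnd hmax).2 (Or.inr hb)) (hco.2 (Or.inl hca))]; rfl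
    · rw [mval_one hnd hmax ((imp_iff hnd hmax).2 (Or.inr hb)) (hco.2 (Or.inl hca))]; rfl
  · -- neg
    intro α
    rcases mval_cases hnd hmax α with ⟨ea, ha, hca⟩ | ⟨ea, ha, hca⟩ | ⟨ea, ha, hca⟩ <;> rw [ea]
    · have hn : Fm.neg α ∈ Δ := neg_total hnd hmax ha
      have hcn : Fm.cons (Fm.neg α) ∈ Δ :=
        (cons_iff hnd hmax).2 (fun hp => ha ((dneg_iff hnd hmax).1 hp.2))
      rw [mval_one hnd hmax hn hcn]; rfl
    · have hn : Fm.neg α ∈ Δ := (neg_iff_of_mem hnd hmax ha).2 hca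
      have hdn : Fm.neg (Fm.neg α) ∈ Δ := (dneg_iff hnd hmax).2 ha
      have hcn : Fm.cons (Fm.neg α) ∉ Δ := fun hcn => (cons_iff hnd hmax).1 hcn ⟨hn, hdn⟩
      rw [mval_half hnd hmax hn hcn]; rfl
    · have hn : Fm.neg α ∉ Δ := fun hn => (neg_iff_of_mem hnd hmax ha).1 hn hca
      rw [mval_zero hn]; rfl
  · -- cons
    intro α
    rcases mval_cases hnd hmax α with ⟨ea, ha, hca⟩ | ⟨ea, ha, hca⟩ | ⟨ea, ha, hca⟩ <;> rw [ea]
    · have hnc : Fm.neg (Fm.cons α) ∉ Δ := fun hn =>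
        ha ((and_iff hnd hmax).1 (mem_of_thm hnd hmax ((HCiore.ci α).mp (HCiore.prem hn)))).1
      rw [mval_one hnd hmax hca ((cons_iff hnd hmax).2 (fun hp => hnc hp.2))]; rfl
    · rw [mval_zero hca]; rfl
    · have hnα : Fm.neg α ∉ Δ := fun hn => (cons_iff hnd hmax).1 hca ⟨ha, hn⟩
      have hnc : Fm.neg (Fm.cons α) ∉ Δ := fun hn =>
        hnα ((and_iff hnd hmax).1 (mem_of_thm hnd hmax ((HCiore.ci α).mp (HCiore.prem hn)))).2
      rw [mval_one hnd hmax hca ((cons_iff hnd hmax).2 (fun hp => hnc hp.2))]; rfl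

end Valuation
/-- Soundness and completeness of the Hilbert calculus Ciore w.r.t. the matrix M_e. -/
theorem ciore_sound_complete (Γ : Set Fm) (φ : Fm) :
    HCiore Γ φ ↔
      (∀ v : Fm → V3, IsVal v → (∀ γ ∈ Γ, Des (v γ)) → Des (v φ)) := by
  constructor
  · exact soundness
  · intro hsem
    by_contra hnp
    have hchain : ∀ c ⊆ {T : Set Fm | Γ ⊆ T ∧ ¬ HCiore T φ}, IsChain (· ⊆ ·) c →
        c.Nonempty → ∃ ub ∈ {T : Set Fm | Γ ⊆ T ∧ ¬ HCiore T φ}, ∀ s ∈ c, s ⊆ ub := by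
      intro c hcS hch hcne
      refine ⟨⋃₀ c, ⟨?_, ?_⟩, fun s hs => Set.subset_sUnion_of_mem hs⟩
      · obtain ⟨t, ht⟩ := hcne
        exact (hcS ht).1.trans (Set.subset_sUnion_of_mem ht)
      · intro hd
        obtain ⟨S, hS, hdS⟩ := hc_fin hd
        obtain ⟨t, htc, hts⟩ := finset_subset_chain hch hcne S hS
        exact (hcS htc).2 (hc_mono hts hdS)
    obtain ⟨Δ, hΓΔ, hM⟩ :=
      zorn_subset_nonempty {T : Set Fm | Γ ⊆ T ∧ ¬ HCiore T φ} hchain Γ ⟨subset_rfl, hnp⟩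
    have hnd : ¬ HCiore Δ φ := hM.1.2
    have hmax : ∀ Δ', Δ ⊆ Δ' → ¬ HCiore Δ' φ → Δ' ⊆ Δ := fun Δ' hsub hnd' =>
      hM.2 ⟨hM.1.1.trans hsub, hnd'⟩ hsub
    have hdes := hsem (mval Δ) (isval_mval hnd hmax)
      (fun γ hγ => des_mval.2 (hM.1.1 hγ))
    exact hnd (HCiore.prem (des_mval.1 hdes))
end

section
/- The following rules are derivable in GCiore, for all finite sets Γ, Δ and formulas α, β: (i) (⇒¬∨)′ from Γ,α⇒Δ and Γ,β⇒Δ infer Γ⇒Δ,¬(α∨β); (ii) (⇒¬∧)′ from Γ,α,β⇒Δ infer Γ⇒Δ,¬(α∧β); (iii) (⇒¬→)′ from Γ⇒Δ,α and Γ,β⇒Δ infer Γ⇒Δ,¬(α→β); (iv) (⇒¬)′ from Γ⇒Δ,α and Γ⇒Δ,¬α infer Γ⇒Δ,¬α. That is, whenever the premises of each rule are provable in GCiore, so is its conclusion. -/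
/-- The sequent calculus GCiore. `GC c Γ Δ` means Γ ⇒ Δ is provable;
the flag `c` indicates whether the cut rule may be used (`true`) or not (`false`). -/
inductive GC : Bool → Finset Fm → Finset Fm → Prop
  | ax (c : Bool) (α : Fm) : GC c {α} {α}
  | wL (α : Fm) : GC c Γ Δ → GC c (insert α Γ) Δ
  | wR (α : Fm) : GC c Γ Δ → GC c Γ (insert α Δ)
  | orL : GC c (insert α Γ) Δ → GC c (insert β Γ) Δ → GC c (insert (Fm.or α β) Γ) Δ
  | orR : GC c Γ (insert α (insert β Δ)) → GC c Γ (insert (Fm.or α β) Δ)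
  | negOrL :
      GC c (insert α (insert (Fm.neg α) (insert β (insert (Fm.neg β) Γ)))) Δ →
      GC c (insert (Fm.neg α) (insert (Fm.neg β) Γ)) (insert α (insert β Δ)) →
      GC c (insert (Fm.neg (Fm.or α β)) Γ) Δ
  | negOrR :
      GC c Γ (insert α Δ) → GC c Γ (insert (Fm.neg α) Δ) →
      GC c Γ (insert β Δ) → GC c Γ (insert (Fm.neg β) Δ) →
      GC c Γ (insert (Fm.neg (Fm.or α β)) Δ)
  | andL : GC c (insert α (insert β Γ)) Δ → GC c (insert (Fm.and α β) Γ) Δ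
  | andR : GC c Γ (insert α Δ) → GC c Γ (insert β Δ) → GC c Γ (insert (Fm.and α β) Δ)
  | negAndL :
      GC c Γ (insert α (insert β Δ)) →
      GC c (insert (Fm.neg α) Γ) (insert α Δ) →
      GC c (insert (Fm.neg β) Γ) (insert β Δ) →
      GC c (insert (Fm.neg α) (insert (Fm.neg β) Γ)) Δ →
      GC c (insert (Fm.neg (Fm.and α β)) Γ) Δ
  | negAndR :
      GC c Γ (insert α Δ) → GC c Γ (insert (Fm.neg α) Δ) →
      GC c Γ (insert β Δ) → GC c Γ (insert (Fm.neg β) Δ) →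
      GC c Γ (insert (Fm.neg (Fm.and α β)) Δ)
  | impL : GC c Γ (insert α Δ) → GC c (insert β Γ) Δ → GC c (insert (Fm.imp α β) Γ) Δ
  | impR : GC c (insert α Γ) (insert β Δ) → GC c Γ (insert (Fm.imp α β) Δ)
  | negImpL :
      GC c (insert α (insert (Fm.neg β) Γ)) (insert β Δ) →
      GC c (insert α (insert (Fm.neg α) (insert (Fm.neg β) Γ))) Δ →
      GC c (insert (Fm.neg (Fm.imp α β)) Γ) Δ
  | negImpR :
      GC c Γ (insert α Δ) → GC c Γ (insert (Fm.neg α) Δ) →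
      GC c Γ (insert β Δ) → GC c Γ (insert (Fm.neg β) Δ) →
      GC c Γ (insert (Fm.neg (Fm.imp α β)) Δ)
  | negR : GC c (insert α Γ) Δ → GC c Γ (insert (Fm.neg α) Δ)
  | negNegL : GC c (insert α Γ) Δ → GC c (insert (Fm.neg (Fm.neg α)) Γ) Δ
  | negNegR : GC c Γ (insert α Δ) → GC c Γ (insert (Fm.neg (Fm.neg α)) Δ)
  | consL : GC c Γ (insert α Δ) → GC c Γ (insert (Fm.neg α) Δ) → GC c (insert (Fm.cons α) Γ) Δ
  | consR : GC c (insert α (insert (Fm.neg α) Γ)) Δ → GC c Γ (insert (Fm.cons α) Δ)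
  | negConsL : GC c (insert α (insert (Fm.neg α) Γ)) Δ → GC c (insert (Fm.neg (Fm.cons α)) Γ) Δ
  | cut : GC true Γ (insert α Δ) → GC true (insert α Γ) Δ → GC true Γ Δ

/-- The rules (⇒¬∨)′, (⇒¬∧)′, (⇒¬→)′ and (⇒¬)′ are derivable in GCiore. -/
theorem gciore_derivable_rules (Γ Δ : Finset Fm) (α β : Fm) :
    (GC true (insert α Γ) Δ → GC true (insert β Γ) Δ →
      GC true Γ (insert (Fm.neg (Fm.or α β)) Δ)) ∧
    (GC true (insert α (insert β Γ)) Δ →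
      GC true Γ (insert (Fm.neg (Fm.and α β)) Δ)) ∧
    (GC true Γ (insert α Δ) → GC true (insert β Γ) Δ →
      GC true Γ (insert (Fm.neg (Fm.imp α β)) Δ)) ∧
    (GC true Γ (insert α Δ) → GC true Γ (insert (Fm.neg α) Δ) →
      GC true Γ (insert (Fm.neg α) Δ)) := by
  exact ⟨fun h1 h2 => GC.negR (GC.orL h1 h2),
         fun h => GC.negR (GC.andL h),
         fun h1 h2 => GC.negR (GC.impL h1 h2),
         fun _ h2 => h2⟩
end

section
/- For all finite sets of formulas Γ and Δ, the sequent Γ⇒Δ is provable in GCiore if and only if it is provable in GCiore′; moreover, Γ⇒Δ is provable in GCiore without using the cut rule if and only if it is provable in GCiore′ without using the cut rule. -/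
/-- The sequent calculus GCiore′ : GCiore with (⇒¬∨), (⇒¬∧), (⇒¬→), (⇒¬)
replaced by their double-primed versions. -/
inductive GCp : Bool → Finset Fm → Finset Fm → Prop
  | ax (c : Bool) (α : Fm) : GCp c {α} {α}
  | wL (α : Fm) : GCp c Γ Δ → GCp c (insert α Γ) Δ
  | wR (α : Fm) : GCp c Γ Δ → GCp c Γ (insert α Δ)
  | orL : GCp c (insert α Γ) Δ → GCp c (insert β Γ) Δ → GCp c (insert (Fm.or α β) Γ) Δ
  | orR : GCp c Γ (insert α (insert β Δ)) → GCp c Γ (insert (Fm.or α β) Δ)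
  | negOrL :
      GCp c (insert α (insert (Fm.neg α) (insert β (insert (Fm.neg β) Γ)))) Δ →
      GCp c (insert (Fm.neg α) (insert (Fm.neg β) Γ)) (insert α (insert β Δ)) →
      GCp c (insert (Fm.neg (Fm.or α β)) Γ) Δ
  | negOrR :
      GCp c (insert α Γ) (insert (Fm.neg α) Δ) → GCp c (insert α Γ) (insert β Δ) →
      GCp c (insert α Γ) (insert (Fm.neg β) Δ) → GCp c (insert β Γ) (insert α Δ) →
      GCp c (insert β Γ) (insert (Fm.neg α) Δ) → GCp c (insert β Γ) (insert (Fm.neg β) Δ) →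
      GCp c Γ (insert (Fm.neg (Fm.or α β)) Δ)
  | andL : GCp c (insert α (insert β Γ)) Δ → GCp c (insert (Fm.and α β) Γ) Δ
  | andR : GCp c Γ (insert α Δ) → GCp c Γ (insert β Δ) → GCp c Γ (insert (Fm.and α β) Δ)
  | negAndL :
      GCp c Γ (insert α (insert β Δ)) →
      GCp c (insert (Fm.neg α) Γ) (insert α Δ) →
      GCp c (insert (Fm.neg β) Γ) (insert β Δ) →
      GCp c (insert (Fm.neg α) (insert (Fm.neg β) Γ)) Δ →
      GCp c (insert (Fm.neg (Fm.and α β)) Γ) Δ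
  | negAndR :
      GCp c (insert α (insert β Γ)) (insert (Fm.neg α) Δ) →
      GCp c (insert α (insert β Γ)) (insert (Fm.neg β) Δ) →
      GCp c Γ (insert (Fm.neg (Fm.and α β)) Δ)
  | impL : GCp c Γ (insert α Δ) → GCp c (insert β Γ) Δ → GCp c (insert (Fm.imp α β) Γ) Δ
  | impR : GCp c (insert α Γ) (insert β Δ) → GCp c Γ (insert (Fm.imp α β) Δ)
  | negImpL :
      GCp c (insert α (insert (Fm.neg β) Γ)) (insert β Δ) →
      GCp c (insert α (insert (Fm.neg α) (insert (Fm.neg β) Γ))) Δ →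
      GCp c (insert (Fm.neg (Fm.imp α β)) Γ) Δ
  | negImpR :
      GCp c Γ (insert α Δ) →
      GCp c (insert β Γ) (insert (Fm.neg α) Δ) →
      GCp c (insert β Γ) (insert (Fm.neg β) Δ) →
      GCp c Γ (insert (Fm.neg (Fm.imp α β)) Δ)
  | negR : GCp c (insert α Γ) (insert (Fm.neg α) Δ) → GCp c Γ (insert (Fm.neg α) Δ)
  | negNegL : GCp c (insert α Γ) Δ → GCp c (insert (Fm.neg (Fm.neg α)) Γ) Δ
  | negNegR : GCp c Γ (insert α Δ) → GCp c Γ (insert (Fm.neg (Fm.neg α)) Δ)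
  | consL : GCp c Γ (insert α Δ) → GCp c Γ (insert (Fm.neg α) Δ) → GCp c (insert (Fm.cons α) Γ) Δ
  | consR : GCp c (insert α (insert (Fm.neg α) Γ)) Δ → GCp c Γ (insert (Fm.cons α) Δ)
  | negConsL : GCp c (insert α (insert (Fm.neg α) Γ)) Δ → GCp c (insert (Fm.neg (Fm.cons α)) Γ) Δ
  | cut : GCp true Γ (insert α Δ) → GCp true (insert α Γ) Δ → GCp true Γ Δ


section Aux
variable {c : Bool} {Γ Δ Γ' Δ' : Finset Fm} {α : Fm}

lemma gc_mono (h : GC c Γ Δ) (hΓ : Γ ⊆ Γ') (hΔ : Δ ⊆ Δ') : GC c Γ' Δ' := by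
  have h1 : ∀ (S : Finset Fm), GC c (S ∪ Γ) Δ := by
    intro S
    induction S using Finset.induction_on with
    | empty => simpa
    | insert _ _ hx ih => rw [Finset.insert_union]; exact GC.wL _ ih
  have h2 : GC c Γ' Δ := by have := h1 Γ'; rwa [Finset.union_eq_left.2 hΓ] at this
  have h3 : ∀ (S : Finset Fm), GC c Γ' (S ∪ Δ) := by
    intro S
    induction S using Finset.induction_on with
    | empty => simpa
    | insert _ _ hx ih => rw [Finset.insert_union]; exact GC.wR _ ih
  have := h3 Δ'; rwa [Finset.union_eq_left.2 hΔ] at this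

lemma gcp_mono (h : GCp c Γ Δ) (hΓ : Γ ⊆ Γ') (hΔ : Δ ⊆ Δ') : GCp c Γ' Δ' := by
  have h1 : ∀ (S : Finset Fm), GCp c (S ∪ Γ) Δ := by
    intro S
    induction S using Finset.induction_on with
    | empty => simpa
    | insert _ _ hx ih => rw [Finset.insert_union]; exact GCp.wL _ ih
  have h2 : GCp c Γ' Δ := by have := h1 Γ'; rwa [Finset.union_eq_left.2 hΓ] at this
  have h3 : ∀ (S : Finset Fm), GCp c Γ' (S ∪ Δ) := by
    intro S
    induction S using Finset.induction_on with
    | empty => simpa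
    | insert _ _ hx ih => rw [Finset.insert_union]; exact GCp.wR _ ih
  have := h3 Δ'; rwa [Finset.union_eq_left.2 hΔ] at this

lemma gc_ax (h1 : α ∈ Γ) (h2 : α ∈ Δ) : GC c Γ Δ :=
  gc_mono (GC.ax c α) (Finset.singleton_subset_iff.2 h1) (Finset.singleton_subset_iff.2 h2)

end Aux

lemma gc_to_gcp : ∀ {c : Bool} {Γ Δ : Finset Fm}, GC c Γ Δ → GCp c Γ Δ := by
  intro c Γ Δ h
  induction h with
  | ax c α => exact GCp.ax c α
  | wL α _ ih => exact GCp.wL α ih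
  | wR α _ ih => exact GCp.wR α ih
  | orL _ _ ih1 ih2 => exact GCp.orL ih1 ih2
  | orR _ ih => exact GCp.orR ih
  | negOrL _ _ ih1 ih2 => exact GCp.negOrL ih1 ih2
  | negOrR _ _ _ _ ih1 ih2 ih3 ih4 =>
      exact GCp.negOrR (GCp.wL _ ih2) (GCp.wL _ ih3) (GCp.wL _ ih4)
        (GCp.wL _ ih1) (GCp.wL _ ih2) (GCp.wL _ ih4)
  | andL _ ih => exact GCp.andL ih
  | andR _ _ ih1 ih2 => exact GCp.andR ih1 ih2
  | negAndL _ _ _ _ ih1 ih2 ih3 ih4 => exact GCp.negAndL ih1 ih2 ih3 ih4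
  | negAndR _ _ _ _ ih1 ih2 ih3 ih4 =>
      exact GCp.negAndR (GCp.wL _ (GCp.wL _ ih2)) (GCp.wL _ (GCp.wL _ ih4))
  | impL _ _ ih1 ih2 => exact GCp.impL ih1 ih2
  | impR _ ih => exact GCp.impR ih
  | negImpL _ _ ih1 ih2 => exact GCp.negImpL ih1 ih2
  | negImpR _ _ _ _ ih1 ih2 ih3 ih4 =>
      exact GCp.negImpR ih1 (GCp.wL _ ih2) (GCp.wL _ ih4)
  | negR _ ih => exact GCp.negR (GCp.wR _ ih)
  | negNegL _ ih => exact GCp.negNegL ih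
  | negNegR _ ih => exact GCp.negNegR ih
  | consL _ _ ih1 ih2 => exact GCp.consL ih1 ih2
  | consR _ ih => exact GCp.consR ih
  | negConsL _ ih => exact GCp.negConsL ih
  | cut _ _ ih1 ih2 => exact GCp.cut ih1 ih2

lemma gcp_to_gc : ∀ {c : Bool} {Γ Δ : Finset Fm}, GCp c Γ Δ → GC c Γ Δ := by
  intro c Γ Δ h
  induction h with
  | ax c α => exact GC.ax c α
  | wL α _ ih => exact GC.wL α ih
  | wR α _ ih => exact GC.wR α ih
  | orL _ _ ih1 ih2 => exact GC.orL ih1 ih2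
  | orR _ ih => exact GC.orR ih
  | negOrL _ _ ih1 ih2 => exact GC.negOrL ih1 ih2
  | @negOrR c α Γ Δ β _ _ _ _ _ _ ih1 ih2 ih3 ih4 ih5 ih6 =>
      rw [← Finset.insert_idem]
      apply GC.negR
      apply GC.orL
      · exact GC.negOrR (gc_ax (Finset.mem_insert_self _ _) (Finset.mem_insert_self _ _))
          ih1 ih2 ih3
      · exact GC.negOrR ih4 ih5
          (gc_ax (Finset.mem_insert_self _ _) (Finset.mem_insert_self _ _)) ih6
  | andL _ ih => exact GC.andL ih
  | andR _ _ ih1 ih2 => exact GC.andR ih1 ih2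
  | negAndL _ _ _ _ ih1 ih2 ih3 ih4 => exact GC.negAndL ih1 ih2 ih3 ih4
  | @negAndR c α β Γ Δ _ _ ih1 ih2 =>
      rw [← Finset.insert_idem]
      apply GC.negR
      apply GC.andL
      exact GC.negAndR (gc_ax (Finset.mem_insert_self _ _) (Finset.mem_insert_self _ _))
        ih1
        (gc_ax (Finset.mem_insert_of_mem (Finset.mem_insert_self _ _)) (Finset.mem_insert_self _ _))
        ih2
  | impL _ _ ih1 ih2 => exact GC.impL ih1 ih2
  | impR _ ih => exact GC.impR ih
  | negImpL _ _ ih1 ih2 => exact GC.negImpL ih1 ih2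
  | @negImpR c Γ Δ α β _ _ _ ih1 ih2 ih3 =>
      rw [← Finset.insert_idem]
      apply GC.negR
      apply GC.impL
      · exact gc_mono ih1 (Finset.Subset.refl _)
          (Finset.insert_subset_insert _ (Finset.subset_insert _ _))
      · exact GC.negImpR (GC.wL _ ih1) ih2
          (gc_ax (Finset.mem_insert_self _ _) (Finset.mem_insert_self _ _)) ih3
  | @negR c α Γ Δ _ ih =>
      rw [← Finset.insert_idem]
      exact GC.negR ih
  | negNegL _ ih => exact GC.negNegL ih
  | negNegR _ ih => exact GC.negNegR ih
  | consL _ _ ih1 ih2 => exact GC.consL ih1 ih2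
  | consR _ ih => exact GC.consR ih
  | negConsL _ ih => exact GC.negConsL ih
  | cut _ _ ih1 ih2 => exact GC.cut ih1 ih2

/-- GCiore and GCiore′ prove the same sequents, with and without cut. -/
theorem gciore_iff_gciore' (Γ Δ : Finset Fm) :
    (GC true Γ Δ ↔ GCp true Γ Δ) ∧ (GC false Γ Δ ↔ GCp false Γ Δ) := by
  exact ⟨⟨gc_to_gcp, gcp_to_gc⟩, ⟨gc_to_gcp, gcp_to_gc⟩⟩
end

section
/- Inversion principle: every logical rule of GCiore′ is invertible with respect to the matrix M_e; that is, for each logical rule of GCiore′, if the conclusion sequent is valid in M_e then every premise sequent is valid in M_e. -/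
set_option maxHeartbeats 4000000

/-- Inversion principle: all the logical rules of GCiore′ are invertible w.r.t. M_e. -/
theorem gciore'_inversion (Γ Δ : Finset Fm) (α β : Fm) :
    -- (∨⇒)
    (ValidSeqP (insert (Fm.or α β) Γ) Δ →
      ValidSeqP (insert α Γ) Δ ∧ ValidSeqP (insert β Γ) Δ) ∧
    -- (⇒∨)
    (ValidSeqP Γ (insert (Fm.or α β) Δ) → ValidSeqP Γ (insert α (insert β Δ))) ∧
    -- (¬∨⇒)
    (ValidSeqP (insert (Fm.neg (Fm.or α β)) Γ) Δ →
      ValidSeqP (insert α (insert (Fm.neg α) (insert β (insert (Fm.neg β) Γ)))) Δ ∧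
      ValidSeqP (insert (Fm.neg α) (insert (Fm.neg β) Γ)) (insert α (insert β Δ))) ∧
    -- (⇒¬∨)″
    (ValidSeqP Γ (insert (Fm.neg (Fm.or α β)) Δ) →
      ValidSeqP (insert α Γ) (insert (Fm.neg α) Δ) ∧
      ValidSeqP (insert α Γ) (insert β Δ) ∧
      ValidSeqP (insert α Γ) (insert (Fm.neg β) Δ) ∧
      ValidSeqP (insert β Γ) (insert α Δ) ∧
      ValidSeqP (insert β Γ) (insert (Fm.neg α) Δ) ∧
      ValidSeqP (insert β Γ) (insert (Fm.neg β) Δ)) ∧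
    -- (∧⇒)
    (ValidSeqP (insert (Fm.and α β) Γ) Δ → ValidSeqP (insert α (insert β Γ)) Δ) ∧
    -- (⇒∧)
    (ValidSeqP Γ (insert (Fm.and α β) Δ) →
      ValidSeqP Γ (insert α Δ) ∧ ValidSeqP Γ (insert β Δ)) ∧
    -- (¬∧⇒)
    (ValidSeqP (insert (Fm.neg (Fm.and α β)) Γ) Δ →
      ValidSeqP Γ (insert α (insert β Δ)) ∧
      ValidSeqP (insert (Fm.neg α) Γ) (insert α Δ) ∧
      ValidSeqP (insert (Fm.neg β) Γ) (insert β Δ) ∧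
      ValidSeqP (insert (Fm.neg α) (insert (Fm.neg β) Γ)) Δ) ∧
    -- (⇒¬∧)″
    (ValidSeqP Γ (insert (Fm.neg (Fm.and α β)) Δ) →
      ValidSeqP (insert α (insert β Γ)) (insert (Fm.neg α) Δ) ∧
      ValidSeqP (insert α (insert β Γ)) (insert (Fm.neg β) Δ)) ∧
    -- (→⇒)
    (ValidSeqP (insert (Fm.imp α β) Γ) Δ →
      ValidSeqP Γ (insert α Δ) ∧ ValidSeqP (insert β Γ) Δ) ∧
    -- (⇒→)
    (ValidSeqP Γ (insert (Fm.imp α β) Δ) → ValidSeqP (insert α Γ) (insert β Δ)) ∧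
    -- (¬→⇒)
    (ValidSeqP (insert (Fm.neg (Fm.imp α β)) Γ) Δ →
      ValidSeqP (insert α (insert (Fm.neg β) Γ)) (insert β Δ) ∧
      ValidSeqP (insert α (insert (Fm.neg α) (insert (Fm.neg β) Γ))) Δ) ∧
    -- (⇒¬→)″
    (ValidSeqP Γ (insert (Fm.neg (Fm.imp α β)) Δ) →
      ValidSeqP Γ (insert α Δ) ∧
      ValidSeqP (insert β Γ) (insert (Fm.neg α) Δ) ∧
      ValidSeqP (insert β Γ) (insert (Fm.neg β) Δ)) ∧
    -- (⇒¬)″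
    (ValidSeqP Γ (insert (Fm.neg α) Δ) → ValidSeqP (insert α Γ) (insert (Fm.neg α) Δ)) ∧
    -- (¬¬⇒)
    (ValidSeqP (insert (Fm.neg (Fm.neg α)) Γ) Δ → ValidSeqP (insert α Γ) Δ) ∧
    -- (⇒¬¬)
    (ValidSeqP Γ (insert (Fm.neg (Fm.neg α)) Δ) → ValidSeqP Γ (insert α Δ)) ∧
    -- (∘⇒)
    (ValidSeqP (insert (Fm.cons α) Γ) Δ →
      ValidSeqP Γ (insert α Δ) ∧ ValidSeqP Γ (insert (Fm.neg α) Δ)) ∧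
    -- (⇒∘)
    (ValidSeqP Γ (insert (Fm.cons α) Δ) → ValidSeqP (insert α (insert (Fm.neg α) Γ)) Δ) ∧
    -- (¬∘⇒)
    (ValidSeqP (insert (Fm.neg (Fm.cons α)) Γ) Δ →
      ValidSeqP (insert α (insert (Fm.neg α) Γ)) Δ) := by
  refine ⟨?_, ?_, ?_, ?_, ?_, ?_, ?_, ?_, ?_, ?_, ?_, ?_, ?_, ?_, ?_, ?_, ?_, ?_⟩ <;>
  · intro h
    repeat' apply And.intro
    all_goals
      intro v hv
      obtain ⟨h1, h2, h3, h4, h5⟩ := hv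
      have H := h v ⟨h1, h2, h3, h4, h5⟩
      simp only [SatSeqP, Finset.exists_mem_insert, h1, h2, h3, h4, h5] at H ⊢
      clear h h1 h2 h3 h4 h5
      cases hα : v α <;> cases hβ : v β <;>
        (try simp [hα, hβ, Des, vand, vor, vimp, vneg, vcons] at H ⊢) <;> tauto
end

section
/- Cut-free completeness of GCiore′: if a sequent Γ⇒Δ (with Γ, Δ finite sets of formulas) is valid in the three-valued matrix M_e, then there exists a proof of Γ⇒Δ in GCiore′ that does not use the cut rule. -/
/- ===== auxiliary development ===== -/

instance inst_s6 : Fintype V3 :=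
  ⟨⟨{V3.zero, V3.half, V3.one}, by decide⟩, fun x => by cases x <;> decide⟩

instance inst_s6_2 (x : V3) : Decidable (Des x) :=
  decidable_of_iff (x = V3.half ∨ x = V3.one) Iff.rfl

/-- evaluation of formulas from a variable assignment -/
def evalV (f : ℕ → V3) : Fm → V3
  | Fm.var n => f n
  | Fm.and a b => vand (evalV f a) (evalV f b)
  | Fm.or a b => vor (evalV f a) (evalV f b)
  | Fm.imp a b => vimp (evalV f a) (evalV f b)
  | Fm.neg a => vneg (evalV f a)
  | Fm.cons a => vcons (evalV f a)

lemma isVal_evalV (f : ℕ → V3) : IsVal (evalV f) :=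
  ⟨fun _ _ => rfl, fun _ _ => rfl, fun _ _ => rfl, fun _ => rfl, fun _ => rfl⟩

/-- weakening by a finite set on the left -/
lemma wUnionL {c : Bool} {Γ Δ : Finset Fm} (h : GCp c Γ Δ) (S : Finset Fm) :
    GCp c (Γ ∪ S) Δ := by
  induction S using Finset.induction_on with
  | empty => simpa using h
  | @insert a S _ ih => rw [Finset.union_insert]; exact GCp.wL a ih

lemma wUnionR {c : Bool} {Γ Δ : Finset Fm} (h : GCp c Γ Δ) (S : Finset Fm) :
    GCp c Γ (Δ ∪ S) := by
  induction S using Finset.induction_on with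
  | empty => simpa using h
  | @insert a S _ ih => rw [Finset.union_insert]; exact GCp.wR a ih

lemma ax_mem {c : Bool} {Γ Δ : Finset Fm} {α : Fm} (h1 : α ∈ Γ) (h2 : α ∈ Δ) :
    GCp c Γ Δ := by
  have h := wUnionR (wUnionL (GCp.ax c α) Γ) Δ
  rwa [show ({α} : Finset Fm) ∪ Γ = Γ from Finset.union_eq_right.mpr
        (Finset.singleton_subset_iff.mpr h1),
      show ({α} : Finset Fm) ∪ Δ = Δ from Finset.union_eq_right.mpr
        (Finset.singleton_subset_iff.mpr h2)] at h

lemma valid_mono {Γ Δ Γ' Δ' : Finset Fm} (h : ValidSeqP Γ Δ) (h1 : Γ ⊆ Γ') (h2 : Δ ⊆ Δ') :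
    ValidSeqP Γ' Δ' := by
  intro v hval
  rcases h v hval with ⟨γ, hγ, hh⟩ | ⟨δ, hδ, hh⟩
  · exact Or.inl ⟨γ, h1 hγ, hh⟩
  · exact Or.inr ⟨δ, h2 hδ, hh⟩

lemma mu_lt {C Γ Γ' : Finset Fm} (hC : Γ' ⊆ C) (hs : Γ ⊆ Γ') (hne : ¬ Γ' ⊆ Γ) :
    (C \ Γ').card < (C \ Γ).card := by
  obtain ⟨x, hx1, hx2⟩ := Finset.not_subset.mp hne
  refine Finset.card_lt_card ⟨Finset.sdiff_subset_sdiff (Finset.Subset.refl C) hs, fun h => ?_⟩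
  exact (Finset.mem_sdiff.mp (h (Finset.mem_sdiff.mpr ⟨hC hx1, hx2⟩))).2 hx1

lemma mu_le {C Γ Γ' : Finset Fm} (hs : Γ ⊆ Γ') : (C \ Γ').card ≤ (C \ Γ).card :=
  Finset.card_le_card (Finset.sdiff_subset_sdiff (Finset.Subset.refl C) hs)

lemma mu_step {C Γ Δ Γ' Δ' : Finset Fm} (hΓ' : Γ' ⊆ C) (hΔ' : Δ' ⊆ C)
    (hsΓ : Γ ⊆ Γ') (hsΔ : Δ ⊆ Δ') (hne : ¬ (Γ' ⊆ Γ ∧ Δ' ⊆ Δ)) :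
    (C \ Γ').card + (C \ Δ').card < (C \ Γ).card + (C \ Δ).card := by
  by_cases hg : Γ' ⊆ Γ
  · have h1 := mu_lt hΔ' hsΔ (fun hd => hne ⟨hg, hd⟩)
    have h2 := mu_le (C := C) hsΓ
    omega
  · have h1 := mu_lt hΓ' hsΓ hg
    have h2 := mu_le (C := C) hsΔ
    omega

/-- subformulas -/
def sub : Fm → Finset Fm
  | Fm.var n => {Fm.var n}
  | Fm.and a b => insert (Fm.and a b) (sub a ∪ sub b)
  | Fm.or a b => insert (Fm.or a b) (sub a ∪ sub b)
  | Fm.imp a b => insert (Fm.imp a b) (sub a ∪ sub b)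
  | Fm.neg a => insert (Fm.neg a) (sub a)
  | Fm.cons a => insert (Fm.cons a) (sub a)

lemma mem_sub_self : ∀ φ, φ ∈ sub φ := by
  intro φ; cases φ <;> simp [sub]

lemma sub_trans : ∀ φ ψ, ψ ∈ sub φ → sub ψ ⊆ sub φ := by
  intro φ
  induction φ with
  | var n =>
    intro ψ h; simp [sub] at h; subst h; simp [sub]
  | and a b iha ihb =>
    intro ψ h
    simp only [sub, Finset.mem_insert, Finset.mem_union] at h
    rcases h with h | h | h
    · subst h; exact Finset.Subset.refl _
    · exact (iha ψ h).trans ((Finset.subset_union_left).trans (Finset.subset_insert _ _))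
    · exact (ihb ψ h).trans ((Finset.subset_union_right).trans (Finset.subset_insert _ _))
  | or a b iha ihb =>
    intro ψ h
    simp only [sub, Finset.mem_insert, Finset.mem_union] at h
    rcases h with h | h | h
    · subst h; exact Finset.Subset.refl _
    · exact (iha ψ h).trans ((Finset.subset_union_left).trans (Finset.subset_insert _ _))
    · exact (ihb ψ h).trans ((Finset.subset_union_right).trans (Finset.subset_insert _ _))
  | imp a b iha ihb =>
    intro ψ h
    simp only [sub, Finset.mem_insert, Finset.mem_union] at h
    rcases h with h | h | h
    · subst h; exact Finset.Subset.refl _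
    · exact (iha ψ h).trans ((Finset.subset_union_left).trans (Finset.subset_insert _ _))
    · exact (ihb ψ h).trans ((Finset.subset_union_right).trans (Finset.subset_insert _ _))
  | neg a iha =>
    intro ψ h
    simp only [sub, Finset.mem_insert] at h
    rcases h with h | h
    · subst h; exact Finset.Subset.refl _
    · exact (iha ψ h).trans (Finset.subset_insert _ _)
  | cons a iha =>
    intro ψ h
    simp only [sub, Finset.mem_insert] at h
    rcases h with h | h
    · subst h; exact Finset.Subset.refl _
    · exact (iha ψ h).trans (Finset.subset_insert _ _)

structure ClosedS (C : Finset Fm) : Prop where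
  neg : ∀ ⦃α⦄, Fm.neg α ∈ C → α ∈ C
  and : ∀ ⦃α β⦄, Fm.and α β ∈ C → α ∈ C ∧ β ∈ C ∧ Fm.neg α ∈ C ∧ Fm.neg β ∈ C
  or : ∀ ⦃α β⦄, Fm.or α β ∈ C → α ∈ C ∧ β ∈ C ∧ Fm.neg α ∈ C ∧ Fm.neg β ∈ C
  imp : ∀ ⦃α β⦄, Fm.imp α β ∈ C → α ∈ C ∧ β ∈ C ∧ Fm.neg α ∈ C ∧ Fm.neg β ∈ C
  cons : ∀ ⦃α⦄, Fm.cons α ∈ C → α ∈ C ∧ Fm.neg α ∈ C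

/-- closure of a finite set of formulas -/
def clC (S : Finset Fm) : Finset Fm :=
  S.biUnion sub ∪ (S.biUnion sub).image Fm.neg

lemma subset_clC (S : Finset Fm) : S ⊆ clC S := by
  intro φ h
  exact Finset.mem_union_left _ (Finset.mem_biUnion.mpr ⟨φ, h, mem_sub_self φ⟩)

lemma closed_clC (S : Finset Fm) : ClosedS (clC S) := by
  set C0 := S.biUnion sub with hC0def
  have hC0 : ∀ ψ φ, φ ∈ C0 → ψ ∈ sub φ → ψ ∈ C0 := by
    intro ψ φ h hsub
    rcases Finset.mem_biUnion.mp h with ⟨s, hs, hφ⟩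
    exact Finset.mem_biUnion.mpr ⟨s, hs, sub_trans s φ hφ hsub⟩
  have memL : ∀ {φ}, φ ∈ C0 → φ ∈ clC S := fun h => Finset.mem_union_left _ h
  have memN : ∀ {φ}, φ ∈ C0 → Fm.neg φ ∈ clC S := fun h =>
    Finset.mem_union_right _ (Finset.mem_image.mpr ⟨_, h, rfl⟩)
  constructor
  · intro α h
    rcases Finset.mem_union.mp h with h | h
    · exact memL (hC0 α _ h (by simp [sub, mem_sub_self]))
    · rcases Finset.mem_image.mp h with ⟨b, hb, hbe⟩
      obtain rfl : b = α := by injection hbe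
      exact memL hb
  · intro α β h
    rcases Finset.mem_union.mp h with h | h
    · exact ⟨memL (hC0 α _ h (by simp [sub, mem_sub_self])),
        memL (hC0 β _ h (by simp [sub, mem_sub_self])),
        memN (hC0 α _ h (by simp [sub, mem_sub_self])),
        memN (hC0 β _ h (by simp [sub, mem_sub_self]))⟩
    · rcases Finset.mem_image.mp h with ⟨b, _, hbe⟩
      exact absurd hbe (by simp)
  · intro α β h
    rcases Finset.mem_union.mp h with h | h
    · exact ⟨memL (hC0 α _ h (by simp [sub, mem_sub_self])),
        memL (hC0 β _ h (by simp [sub, mem_sub_self])),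
        memN (hC0 α _ h (by simp [sub, mem_sub_self])),
        memN (hC0 β _ h (by simp [sub, mem_sub_self]))⟩
    · rcases Finset.mem_image.mp h with ⟨b, _, hbe⟩
      exact absurd hbe (by simp)
  · intro α β h
    rcases Finset.mem_union.mp h with h | h
    · exact ⟨memL (hC0 α _ h (by simp [sub, mem_sub_self])),
        memL (hC0 β _ h (by simp [sub, mem_sub_self])),
        memN (hC0 α _ h (by simp [sub, mem_sub_self])),
        memN (hC0 β _ h (by simp [sub, mem_sub_self]))⟩
    · rcases Finset.mem_image.mp h with ⟨b, _, hbe⟩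
      exact absurd hbe (by simp)
  · intro α h
    rcases Finset.mem_union.mp h with h | h
    · exact ⟨memL (hC0 α _ h (by simp [sub, mem_sub_self])),
        memN (hC0 α _ h (by simp [sub, mem_sub_self]))⟩
    · rcases Finset.mem_image.mp h with ⟨b, _, hbe⟩
      exact absurd hbe (by simp)
/-- saturation conditions -/
structure SatS (Γ Δ : Finset Fm) : Prop where
  orL : ∀ α β, Fm.or α β ∈ Γ → α ∈ Γ ∨ β ∈ Γ
  orR : ∀ α β, Fm.or α β ∈ Δ → α ∈ Δ ∧ β ∈ Δ
  andL : ∀ α β, Fm.and α β ∈ Γ → α ∈ Γ ∧ β ∈ Γ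
  andR : ∀ α β, Fm.and α β ∈ Δ → α ∈ Δ ∨ β ∈ Δ
  impL : ∀ α β, Fm.imp α β ∈ Γ → α ∈ Δ ∨ β ∈ Γ
  impR : ∀ α β, Fm.imp α β ∈ Δ → α ∈ Γ ∧ β ∈ Δ
  negR : ∀ α, Fm.neg α ∈ Δ → α ∈ Γ
  nnL : ∀ α, Fm.neg (Fm.neg α) ∈ Γ → α ∈ Γ
  nnR : ∀ α, Fm.neg (Fm.neg α) ∈ Δ → α ∈ Δ
  consL : ∀ α, Fm.cons α ∈ Γ → α ∈ Δ ∨ Fm.neg α ∈ Δ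
  consR : ∀ α, Fm.cons α ∈ Δ → α ∈ Γ ∧ Fm.neg α ∈ Γ
  nconsL : ∀ α, Fm.neg (Fm.cons α) ∈ Γ → α ∈ Γ ∧ Fm.neg α ∈ Γ
  norL : ∀ α β, Fm.neg (Fm.or α β) ∈ Γ →
    (α ∈ Γ ∧ Fm.neg α ∈ Γ ∧ β ∈ Γ ∧ Fm.neg β ∈ Γ) ∨
    (Fm.neg α ∈ Γ ∧ Fm.neg β ∈ Γ ∧ α ∈ Δ ∧ β ∈ Δ)
  norR : ∀ α β, Fm.neg (Fm.or α β) ∈ Δ →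
    (α ∈ Γ ∧ Fm.neg α ∈ Δ) ∨ (α ∈ Γ ∧ β ∈ Δ) ∨ (α ∈ Γ ∧ Fm.neg β ∈ Δ) ∨
    (β ∈ Γ ∧ α ∈ Δ) ∨ (β ∈ Γ ∧ Fm.neg α ∈ Δ) ∨ (β ∈ Γ ∧ Fm.neg β ∈ Δ)
  nandL : ∀ α β, Fm.neg (Fm.and α β) ∈ Γ →
    (α ∈ Δ ∧ β ∈ Δ) ∨ (Fm.neg α ∈ Γ ∧ α ∈ Δ) ∨ (Fm.neg β ∈ Γ ∧ β ∈ Δ) ∨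
    (Fm.neg α ∈ Γ ∧ Fm.neg β ∈ Γ)
  nandR : ∀ α β, Fm.neg (Fm.and α β) ∈ Δ →
    (α ∈ Γ ∧ β ∈ Γ ∧ Fm.neg α ∈ Δ) ∨ (α ∈ Γ ∧ β ∈ Γ ∧ Fm.neg β ∈ Δ)
  nimpL : ∀ α β, Fm.neg (Fm.imp α β) ∈ Γ →
    (α ∈ Γ ∧ Fm.neg β ∈ Γ ∧ β ∈ Δ) ∨ (α ∈ Γ ∧ Fm.neg α ∈ Γ ∧ Fm.neg β ∈ Γ)
  nimpR : ∀ α β, Fm.neg (Fm.imp α β) ∈ Δ →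
    α ∈ Δ ∨ (β ∈ Γ ∧ Fm.neg α ∈ Δ) ∨ (β ∈ Γ ∧ Fm.neg β ∈ Δ)

/-- weight for the countermodel induction -/
def wt : Fm → ℕ
  | Fm.var _ => 0
  | Fm.and a b => wt a + wt b + 1
  | Fm.or a b => wt a + wt b + 1
  | Fm.imp a b => wt a + wt b + 1
  | Fm.neg a => wt a + 1
  | Fm.cons a => wt a + 2

/-- variable assignment of the countermodel -/
def cmf (Γ : Finset Fm) : ℕ → V3 := fun n =>
  if Fm.var n ∈ Γ then (if Fm.neg (Fm.var n) ∈ Γ then V3.half else V3.one) else V3.zero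

lemma cm_key {Γ Δ : Finset Fm} (hd : ∀ a, a ∈ Γ → a ∉ Δ) (hs : SatS Γ Δ) :
    ∀ n φ, wt φ ≤ n →
      (φ ∈ Γ → Des (evalV (cmf Γ) φ)) ∧ (φ ∈ Δ → evalV (cmf Γ) φ = V3.zero) := by
  intro n
  induction n with
  | zero =>
    intro φ hw
    cases φ with
    | var k =>
      constructor
      · intro h
        simp only [evalV, cmf, if_pos h]
        split <;> simp [Des]
      · intro h
        have hn : Fm.var k ∉ Γ := fun hh => hd _ hh h
        simp [evalV, cmf, hn]
    | and a b => simp [wt] at hw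
    | or a b => simp [wt] at hw
    | imp a b => simp [wt] at hw
    | neg a => simp [wt] at hw
    | cons a => simp [wt] at hw
  | succ n ih =>
    intro φ hw
    cases φ with
    | var k =>
      constructor
      · intro h
        simp only [evalV, cmf, if_pos h]
        split <;> simp [Des]
      · intro h
        have hn : Fm.var k ∉ Γ := fun hh => hd _ hh h
        simp [evalV, cmf, hn]
    | and a b =>
      simp only [wt] at hw
      have iha := ih a (by omega)
      have ihb := ih b (by omega)
      constructor
      · intro h
        obtain ⟨ha, hb⟩ := hs.andL a b h
        simp only [evalV]
        exact (by decide : ∀ x y : V3, Des x → Des y → Des (vand x y)) _ _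
          (iha.1 ha) (ihb.1 hb)
      · intro h
        simp only [evalV]
        rcases hs.andR a b h with h' | h'
        · rw [iha.2 h']; exact (by decide : ∀ y : V3, vand V3.zero y = V3.zero) _
        · rw [ihb.2 h']; exact (by decide : ∀ x : V3, vand x V3.zero = V3.zero) _
    | or a b =>
      simp only [wt] at hw
      have iha := ih a (by omega)
      have ihb := ih b (by omega)
      constructor
      · intro h
        simp only [evalV]
        rcases hs.orL a b h with h' | h'
        · exact (by decide : ∀ x y : V3, Des x → Des (vor x y)) _ _ (iha.1 h')
        · exact (by decide : ∀ x y : V3, Des y → Des (vor x y)) _ _ (ihb.1 h')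
      · intro h
        obtain ⟨ha, hb⟩ := hs.orR a b h
        simp only [evalV]
        rw [iha.2 ha, ihb.2 hb]
        rfl
    | imp a b =>
      simp only [wt] at hw
      have iha := ih a (by omega)
      have ihb := ih b (by omega)
      constructor
      · intro h
        simp only [evalV]
        rcases hs.impL a b h with h' | h'
        · rw [iha.2 h']
          exact (by decide : ∀ y : V3, Des (vimp V3.zero y)) _
        · exact (by decide : ∀ x y : V3, Des y → Des (vimp x y)) _ _ (ihb.1 h')
      · intro h
        obtain ⟨ha, hb⟩ := hs.impR a b h
        simp only [evalV]
        rw [ihb.2 hb]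
        exact (by decide : ∀ x : V3, Des x → vimp x V3.zero = V3.zero) _ (iha.1 ha)
    | cons a =>
      simp only [wt] at hw
      have iha := ih a (by omega)
      have ihna := ih (Fm.neg a) (by simp only [wt]; omega)
      constructor
      · intro h
        simp only [evalV]
        rcases hs.consL a h with h' | h'
        · rw [iha.2 h']; decide
        · have := ihna.2 h'
          simp only [evalV] at this
          exact (by decide : ∀ x : V3, vneg x = V3.zero → Des (vcons x)) _ this
      · intro h
        obtain ⟨ha, hna⟩ := hs.consR a h
        have h2 := ihna.1 hna
        simp only [evalV] at h2 ⊢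
        exact (by decide : ∀ x : V3, Des x → Des (vneg x) → vcons x = V3.zero) _
          (iha.1 ha) h2
    | neg a =>
      simp only [wt] at hw
      cases a with
      | var k =>
        constructor
        · intro h
          simp only [evalV, cmf]
          by_cases hv : Fm.var k ∈ Γ <;> simp [hv, h, Des, vneg]
        · intro h
          have hp := hs.negR _ h
          have hnp : Fm.neg (Fm.var k) ∉ Γ := fun hh => hd _ hh h
          simp [evalV, cmf, hp, hnp, vneg]
      | neg b =>
        simp only [wt] at hw
        have ihb := ih b (by omega)
        constructor
        · intro h
          simp only [evalV]
          exact (by decide : ∀ x : V3, Des x → Des (vneg (vneg x))) _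
            (ihb.1 (hs.nnL b h))
        · intro h
          simp only [evalV]
          rw [ihb.2 (hs.nnR b h)]
          rfl
      | and α β =>
        simp only [wt] at hw
        have iha := ih α (by omega)
        have ihb := ih β (by omega)
        have ihna := ih (Fm.neg α) (by simp only [wt]; omega)
        have ihnb := ih (Fm.neg β) (by simp only [wt]; omega)
        constructor
        · intro h
          simp only [evalV]
          rcases hs.nandL α β h with ⟨h1, _⟩ | ⟨_, h1⟩ | ⟨_, h1⟩ | ⟨h1, h2⟩
          · rw [iha.2 h1]
            exact (by decide : ∀ y : V3, Des (vneg (vand V3.zero y))) _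
          · rw [iha.2 h1]
            exact (by decide : ∀ y : V3, Des (vneg (vand V3.zero y))) _
          · rw [ihb.2 h1]
            exact (by decide : ∀ x : V3, Des (vneg (vand x V3.zero))) _
          · have e1 := ihna.1 h1
            have e2 := ihnb.1 h2
            simp only [evalV] at e1 e2
            exact (by decide : ∀ x y : V3,
              Des (vneg x) → Des (vneg y) → Des (vneg (vand x y))) _ _ e1 e2
        · intro h
          simp only [evalV]
          rcases hs.nandR α β h with ⟨h1, h2, h3⟩ | ⟨h1, h2, h3⟩
          · have e3 := ihna.2 h3
            simp only [evalV] at e3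
            exact (by decide : ∀ x y : V3,
              Des x → Des y → vneg x = V3.zero → vneg (vand x y) = V3.zero) _ _
              (iha.1 h1) (ihb.1 h2) e3
          · have e3 := ihnb.2 h3
            simp only [evalV] at e3
            exact (by decide : ∀ x y : V3,
              Des x → Des y → vneg y = V3.zero → vneg (vand x y) = V3.zero) _ _
              (iha.1 h1) (ihb.1 h2) e3
      | or α β =>
        simp only [wt] at hw
        have iha := ih α (by omega)
        have ihb := ih β (by omega)
        have ihna := ih (Fm.neg α) (by simp only [wt]; omega)
        have ihnb := ih (Fm.neg β) (by simp only [wt]; omega)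
        constructor
        · intro h
          simp only [evalV]
          rcases hs.norL α β h with ⟨h1, h2, h3, h4⟩ | ⟨_, _, h3, h4⟩
          · have e2 := ihna.1 h2
            have e4 := ihnb.1 h4
            simp only [evalV] at e2 e4
            exact (by decide : ∀ x y : V3, Des x → Des (vneg x) → Des y →
              Des (vneg y) → Des (vneg (vor x y))) _ _ (iha.1 h1) e2 (ihb.1 h3) e4
          · rw [iha.2 h3, ihb.2 h4]; decide
        · intro h
          simp only [evalV]
          have hone : evalV (cmf Γ) α = V3.one ∨ evalV (cmf Γ) β = V3.one ∨
              (Des (evalV (cmf Γ) α) ∧ evalV (cmf Γ) β = V3.zero) ∨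
              (Des (evalV (cmf Γ) β) ∧ evalV (cmf Γ) α = V3.zero) := by
            rcases hs.norR α β h with ⟨h1, h2⟩ | ⟨h1, h2⟩ | ⟨h1, h2⟩ | ⟨h1, h2⟩ |
              ⟨h1, h2⟩ | ⟨h1, h2⟩
            · have e := ihna.2 h2; simp only [evalV] at e
              exact Or.inl ((by decide : ∀ x : V3, vneg x = V3.zero → x = V3.one) _ e)
            · exact Or.inr (Or.inr (Or.inl ⟨iha.1 h1, ihb.2 h2⟩))
            · have e := ihnb.2 h2; simp only [evalV] at e
              exact Or.inr (Or.inl ((by decide : ∀ x : V3,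
                vneg x = V3.zero → x = V3.one) _ e))
            · exact Or.inr (Or.inr (Or.inr ⟨ihb.1 h1, iha.2 h2⟩))
            · have e := ihna.2 h2; simp only [evalV] at e
              exact Or.inl ((by decide : ∀ x : V3, vneg x = V3.zero → x = V3.one) _ e)
            · have e := ihnb.2 h2; simp only [evalV] at e
              exact Or.inr (Or.inl ((by decide : ∀ x : V3,
                vneg x = V3.zero → x = V3.one) _ e))
          revert hone
          generalize evalV (cmf Γ) α = x
          generalize evalV (cmf Γ) β = y
          revert x y; decide
      | imp α β =>
        simp only [wt] at hw
        have iha := ih α (by omega)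
        have ihb := ih β (by omega)
        have ihna := ih (Fm.neg α) (by simp only [wt]; omega)
        have ihnb := ih (Fm.neg β) (by simp only [wt]; omega)
        constructor
        · intro h
          simp only [evalV]
          rcases hs.nimpL α β h with ⟨h1, _, h3⟩ | ⟨h1, h2, h3⟩
          · rw [ihb.2 h3]
            exact (by decide : ∀ x : V3, Des x → Des (vneg (vimp x V3.zero))) _
              (iha.1 h1)
          · have e2 := ihna.1 h2
            have e3 := ihnb.1 h3
            simp only [evalV] at e2 e3
            exact (by decide : ∀ x y : V3, Des x → Des (vneg x) → Des (vneg y) →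
              Des (vneg (vimp x y))) _ _ (iha.1 h1) e2 e3
        · intro h
          simp only [evalV]
          rcases hs.nimpR α β h with h1 | ⟨h1, h2⟩ | ⟨h1, h2⟩
          · rw [iha.2 h1]
            exact (by decide : ∀ y : V3, vneg (vimp V3.zero y) = V3.zero) _
          · have e2 := ihna.2 h2; simp only [evalV] at e2
            exact (by decide : ∀ x y : V3, Des y → vneg x = V3.zero →
              vneg (vimp x y) = V3.zero) _ _ (ihb.1 h1) e2
          · have e2 := ihnb.2 h2; simp only [evalV] at e2
            exact (by decide : ∀ x y : V3, Des y → vneg y = V3.zero →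
              vneg (vimp x y) = V3.zero) _ _ (ihb.1 h1) e2
      | cons b =>
        simp only [wt] at hw
        have ihb := ih b (by omega)
        have ihnb := ih (Fm.neg b) (by simp only [wt]; omega)
        have ihcb := ih (Fm.cons b) (by simp only [wt]; omega)
        constructor
        · intro h
          obtain ⟨h1, h2⟩ := hs.nconsL b h
          have e2 := ihnb.1 h2
          simp only [evalV] at e2 ⊢
          exact (by decide : ∀ x : V3, Des x → Des (vneg x) →
            Des (vneg (vcons x))) _ (ihb.1 h1) e2
        · intro h
          have h1 := hs.negR _ h
          have e1 := ihcb.1 h1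
          simp only [evalV] at e1 ⊢
          exact (by decide : ∀ x : V3, Des (vcons x) → vneg (vcons x) = V3.zero) _ e1

lemma countermodel {Γ Δ : Finset Fm} (hd : ∀ a, a ∈ Γ → a ∉ Δ) (hs : SatS Γ Δ) :
    ¬ ValidSeqP Γ Δ := by
  intro hv
  rcases hv (evalV (cmf Γ)) (isVal_evalV _) with ⟨γ, hγ, hh⟩ | ⟨δ, hδ, hh⟩
  · exact hh ((cm_key hd hs (wt γ) γ le_rfl).1 hγ)
  · rw [(cm_key hd hs (wt δ) δ le_rfl).2 hδ] at hh
    exact (by decide : ¬ Des V3.zero) hh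
lemma main_lemma (C : Finset Fm) (hC : ClosedS C) :
    ∀ n Γ Δ, (C \ Γ).card + (C \ Δ).card < n → Γ ⊆ C → Δ ⊆ C → ValidSeqP Γ Δ →
      GCp false Γ Δ := by
  intro n
  induction n with
  | zero => intro Γ Δ hn; omega
  | succ n ih =>
    intro Γ Δ hn hΓ hΔ hv
    have step : ∀ Γ' Δ' : Finset Fm, Γ' ⊆ C → Δ' ⊆ C → Γ ⊆ Γ' → Δ ⊆ Δ' →
        ¬ (Γ' ⊆ Γ ∧ Δ' ⊆ Δ) → GCp false Γ' Δ' := by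
      intro Γ' Δ' h1 h2 h3 h4 h5
      apply ih _ _ ?_ h1 h2 (valid_mono hv h3 h4)
      have := mu_step (C := C) h1 h2 h3 h4 h5
      omega
    by_cases hax : ∃ α, α ∈ Γ ∧ α ∈ Δ
    case pos =>
      obtain ⟨α, ha1, ha2⟩ := hax
      exact ax_mem ha1 ha2
    -- S1 : or on the left
    by_cases h1 : ∀ α β, Fm.or α β ∈ Γ → α ∈ Γ ∨ β ∈ Γ
    case neg =>
      simp only [not_forall] at h1
      obtain ⟨α, β, h1⟩ := h1
      obtain ⟨hm, hco⟩ := h1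
      obtain ⟨hαC, hβC, -, -⟩ := hC.or (hΓ hm)
      have P1 := step (insert α Γ) Δ (Finset.insert_subset hαC hΓ) hΔ
        (Finset.subset_insert _ _) (Finset.Subset.refl _)
        (fun hh => hco (Or.inl (hh.1 (by simp))))
      have P2 := step (insert β Γ) Δ (Finset.insert_subset hβC hΓ) hΔ
        (Finset.subset_insert _ _) (Finset.Subset.refl _)
        (fun hh => hco (Or.inr (hh.1 (by simp))))
      have := GCp.orL P1 P2
      rwa [Finset.insert_eq_self.mpr hm] at this
    -- S2 : or on the right
    by_cases h2 : ∀ α β, Fm.or α β ∈ Δ → α ∈ Δ ∧ β ∈ Δ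
    case neg =>
      simp only [not_forall] at h2
      obtain ⟨α, β, h2⟩ := h2
      obtain ⟨hm, hco⟩ := h2
      obtain ⟨hαC, hβC, -, -⟩ := hC.or (hΔ hm)
      have P1 := step Γ (insert α (insert β Δ)) hΓ
        (Finset.insert_subset hαC (Finset.insert_subset hβC hΔ))
        (Finset.Subset.refl _) (by intro x hx; simp [hx])
        (fun hh => hco ⟨hh.2 (by simp), hh.2 (by simp)⟩)
      have := GCp.orR P1
      rwa [Finset.insert_eq_self.mpr hm] at this
    -- S3 : and on the left
    by_cases h3 : ∀ α β, Fm.and α β ∈ Γ → α ∈ Γ ∧ β ∈ Γ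
    case neg =>
      simp only [not_forall] at h3
      obtain ⟨α, β, h3⟩ := h3
      obtain ⟨hm, hco⟩ := h3
      obtain ⟨hαC, hβC, -, -⟩ := hC.and (hΓ hm)
      have P1 := step (insert α (insert β Γ)) Δ
        (Finset.insert_subset hαC (Finset.insert_subset hβC hΓ)) hΔ
        (by intro x hx; simp [hx]) (Finset.Subset.refl _)
        (fun hh => hco ⟨hh.1 (by simp), hh.1 (by simp)⟩)
      have := GCp.andL P1
      rwa [Finset.insert_eq_self.mpr hm] at this
    -- S4 : and on the right
    by_cases h4 : ∀ α β, Fm.and α β ∈ Δ → α ∈ Δ ∨ β ∈ Δ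
    case neg =>
      simp only [not_forall] at h4
      obtain ⟨α, β, h4⟩ := h4
      obtain ⟨hm, hco⟩ := h4
      obtain ⟨hαC, hβC, -, -⟩ := hC.and (hΔ hm)
      have P1 := step Γ (insert α Δ) hΓ (Finset.insert_subset hαC hΔ)
        (Finset.Subset.refl _) (Finset.subset_insert _ _)
        (fun hh => hco (Or.inl (hh.2 (by simp))))
      have P2 := step Γ (insert β Δ) hΓ (Finset.insert_subset hβC hΔ)
        (Finset.Subset.refl _) (Finset.subset_insert _ _)
        (fun hh => hco (Or.inr (hh.2 (by simp))))
      have := GCp.andR P1 P2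
      rwa [Finset.insert_eq_self.mpr hm] at this
    -- S5 : imp on the left
    by_cases h5 : ∀ α β, Fm.imp α β ∈ Γ → α ∈ Δ ∨ β ∈ Γ
    case neg =>
      simp only [not_forall] at h5
      obtain ⟨α, β, h5⟩ := h5
      obtain ⟨hm, hco⟩ := h5
      obtain ⟨hαC, hβC, -, -⟩ := hC.imp (hΓ hm)
      have P1 := step Γ (insert α Δ) hΓ (Finset.insert_subset hαC hΔ)
        (Finset.Subset.refl _) (Finset.subset_insert _ _)
        (fun hh => hco (Or.inl (hh.2 (by simp))))
      have P2 := step (insert β Γ) Δ (Finset.insert_subset hβC hΓ) hΔ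
        (Finset.subset_insert _ _) (Finset.Subset.refl _)
        (fun hh => hco (Or.inr (hh.1 (by simp))))
      have := GCp.impL P1 P2
      rwa [Finset.insert_eq_self.mpr hm] at this
    -- S6 : imp on the right
    by_cases h6 : ∀ α β, Fm.imp α β ∈ Δ → α ∈ Γ ∧ β ∈ Δ
    case neg =>
      simp only [not_forall] at h6
      obtain ⟨α, β, h6⟩ := h6
      obtain ⟨hm, hco⟩ := h6
      obtain ⟨hαC, hβC, -, -⟩ := hC.imp (hΔ hm)
      have P1 := step (insert α Γ) (insert β Δ) (Finset.insert_subset hαC hΓ)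
        (Finset.insert_subset hβC hΔ) (Finset.subset_insert _ _)
        (Finset.subset_insert _ _)
        (fun hh => hco ⟨hh.1 (by simp), hh.2 (by simp)⟩)
      have := GCp.impR P1
      rwa [Finset.insert_eq_self.mpr hm] at this
    -- S7 : negR
    by_cases h7 : ∀ α, Fm.neg α ∈ Δ → α ∈ Γ
    case neg =>
      simp only [not_forall] at h7
      obtain ⟨α, h7⟩ := h7
      obtain ⟨hm, hco⟩ := h7
      have hαC := hC.neg (hΔ hm)
      have P1 := step (insert α Γ) Δ (Finset.insert_subset hαC hΓ) hΔ
        (Finset.subset_insert _ _) (Finset.Subset.refl _)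
        (fun hh => hco (hh.1 (by simp)))
      have P1' : GCp false (insert α Γ) (insert (Fm.neg α) Δ) := by
        rwa [Finset.insert_eq_self.mpr hm]
      have := GCp.negR P1'
      rwa [Finset.insert_eq_self.mpr hm] at this
    -- S8 : double negation left
    by_cases h8 : ∀ α, Fm.neg (Fm.neg α) ∈ Γ → α ∈ Γ
    case neg =>
      simp only [not_forall] at h8
      obtain ⟨α, h8⟩ := h8
      obtain ⟨hm, hco⟩ := h8
      have hαC := hC.neg (hC.neg (hΓ hm))
      have P1 := step (insert α Γ) Δ (Finset.insert_subset hαC hΓ) hΔ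
        (Finset.subset_insert _ _) (Finset.Subset.refl _)
        (fun hh => hco (hh.1 (by simp)))
      have := GCp.negNegL P1
      rwa [Finset.insert_eq_self.mpr hm] at this
    -- S9 : double negation right
    by_cases h9 : ∀ α, Fm.neg (Fm.neg α) ∈ Δ → α ∈ Δ
    case neg =>
      simp only [not_forall] at h9
      obtain ⟨α, h9⟩ := h9
      obtain ⟨hm, hco⟩ := h9
      have hαC := hC.neg (hC.neg (hΔ hm))
      have P1 := step Γ (insert α Δ) hΓ (Finset.insert_subset hαC hΔ)
        (Finset.Subset.refl _) (Finset.subset_insert _ _)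
        (fun hh => hco (hh.2 (by simp)))
      have := GCp.negNegR P1
      rwa [Finset.insert_eq_self.mpr hm] at this
    -- S10 : cons on the left
    by_cases h10 : ∀ α, Fm.cons α ∈ Γ → α ∈ Δ ∨ Fm.neg α ∈ Δ
    case neg =>
      simp only [not_forall] at h10
      obtain ⟨α, h10⟩ := h10
      obtain ⟨hm, hco⟩ := h10
      obtain ⟨hαC, hnαC⟩ := hC.cons (hΓ hm)
      have P1 := step Γ (insert α Δ) hΓ (Finset.insert_subset hαC hΔ)
        (Finset.Subset.refl _) (Finset.subset_insert _ _)
        (fun hh => hco (Or.inl (hh.2 (by simp))))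
      have P2 := step Γ (insert (Fm.neg α) Δ) hΓ (Finset.insert_subset hnαC hΔ)
        (Finset.Subset.refl _) (Finset.subset_insert _ _)
        (fun hh => hco (Or.inr (hh.2 (by simp))))
      have := GCp.consL P1 P2
      rwa [Finset.insert_eq_self.mpr hm] at this
    -- S11 : cons on the right
    by_cases h11 : ∀ α, Fm.cons α ∈ Δ → α ∈ Γ ∧ Fm.neg α ∈ Γ
    case neg =>
      simp only [not_forall] at h11
      obtain ⟨α, h11⟩ := h11
      obtain ⟨hm, hco⟩ := h11
      obtain ⟨hαC, hnαC⟩ := hC.cons (hΔ hm)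
      have P1 := step (insert α (insert (Fm.neg α) Γ)) Δ
        (Finset.insert_subset hαC (Finset.insert_subset hnαC hΓ)) hΔ
        (by intro x hx; simp [hx]) (Finset.Subset.refl _)
        (fun hh => hco ⟨hh.1 (by simp), hh.1 (by simp)⟩)
      have := GCp.consR P1
      rwa [Finset.insert_eq_self.mpr hm] at this
    -- S12 : neg cons on the left
    by_cases h12 : ∀ α, Fm.neg (Fm.cons α) ∈ Γ → α ∈ Γ ∧ Fm.neg α ∈ Γ
    case neg =>
      simp only [not_forall] at h12
      obtain ⟨α, h12⟩ := h12
      obtain ⟨hm, hco⟩ := h12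
      obtain ⟨hαC, hnαC⟩ := hC.cons (hC.neg (hΓ hm))
      have P1 := step (insert α (insert (Fm.neg α) Γ)) Δ
        (Finset.insert_subset hαC (Finset.insert_subset hnαC hΓ)) hΔ
        (by intro x hx; simp [hx]) (Finset.Subset.refl _)
        (fun hh => hco ⟨hh.1 (by simp), hh.1 (by simp)⟩)
      have := GCp.negConsL P1
      rwa [Finset.insert_eq_self.mpr hm] at this
    -- S13 : neg or on the left
    by_cases h13 : ∀ α β, Fm.neg (Fm.or α β) ∈ Γ →
        (α ∈ Γ ∧ Fm.neg α ∈ Γ ∧ β ∈ Γ ∧ Fm.neg β ∈ Γ) ∨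
        (Fm.neg α ∈ Γ ∧ Fm.neg β ∈ Γ ∧ α ∈ Δ ∧ β ∈ Δ)
    case neg =>
      simp only [not_forall] at h13
      obtain ⟨α, β, h13⟩ := h13
      obtain ⟨hm, hco⟩ := h13
      obtain ⟨hαC, hβC, hnαC, hnβC⟩ := hC.or (hC.neg (hΓ hm))
      have P1 := step (insert α (insert (Fm.neg α) (insert β (insert (Fm.neg β) Γ)))) Δ
        (Finset.insert_subset hαC (Finset.insert_subset hnαC
          (Finset.insert_subset hβC (Finset.insert_subset hnβC hΓ)))) hΔ
        (by intro x hx; simp [hx]) (Finset.Subset.refl _)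
        (fun hh => hco (Or.inl ⟨hh.1 (by simp), hh.1 (by simp), hh.1 (by simp),
          hh.1 (by simp)⟩))
      have P2 := step (insert (Fm.neg α) (insert (Fm.neg β) Γ)) (insert α (insert β Δ))
        (Finset.insert_subset hnαC (Finset.insert_subset hnβC hΓ))
        (Finset.insert_subset hαC (Finset.insert_subset hβC hΔ))
        (by intro x hx; simp [hx]) (by intro x hx; simp [hx])
        (fun hh => hco (Or.inr ⟨hh.1 (by simp), hh.1 (by simp), hh.2 (by simp),
          hh.2 (by simp)⟩))
      have := GCp.negOrL P1 P2
      rwa [Finset.insert_eq_self.mpr hm] at this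
    -- S14 : neg or on the right
    by_cases h14 : ∀ α β, Fm.neg (Fm.or α β) ∈ Δ →
        (α ∈ Γ ∧ Fm.neg α ∈ Δ) ∨ (α ∈ Γ ∧ β ∈ Δ) ∨ (α ∈ Γ ∧ Fm.neg β ∈ Δ) ∨
        (β ∈ Γ ∧ α ∈ Δ) ∨ (β ∈ Γ ∧ Fm.neg α ∈ Δ) ∨ (β ∈ Γ ∧ Fm.neg β ∈ Δ)
    case neg =>
      simp only [not_forall] at h14
      obtain ⟨α, β, h14⟩ := h14
      obtain ⟨hm, hco⟩ := h14
      obtain ⟨hαC, hβC, hnαC, hnβC⟩ := hC.or (hC.neg (hΔ hm))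
      have P1 := step (insert α Γ) (insert (Fm.neg α) Δ)
        (Finset.insert_subset hαC hΓ) (Finset.insert_subset hnαC hΔ)
        (Finset.subset_insert _ _) (Finset.subset_insert _ _)
        (fun hh => hco (Or.inl ⟨hh.1 (by simp), hh.2 (by simp)⟩))
      have P2 := step (insert α Γ) (insert β Δ)
        (Finset.insert_subset hαC hΓ) (Finset.insert_subset hβC hΔ)
        (Finset.subset_insert _ _) (Finset.subset_insert _ _)
        (fun hh => hco (Or.inr (Or.inl ⟨hh.1 (by simp), hh.2 (by simp)⟩)))
      have P3 := step (insert α Γ) (insert (Fm.neg β) Δ)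
        (Finset.insert_subset hαC hΓ) (Finset.insert_subset hnβC hΔ)
        (Finset.subset_insert _ _) (Finset.subset_insert _ _)
        (fun hh => hco (Or.inr (Or.inr (Or.inl ⟨hh.1 (by simp), hh.2 (by simp)⟩))))
      have P4 := step (insert β Γ) (insert α Δ)
        (Finset.insert_subset hβC hΓ) (Finset.insert_subset hαC hΔ)
        (Finset.subset_insert _ _) (Finset.subset_insert _ _)
        (fun hh => hco (Or.inr (Or.inr (Or.inr (Or.inl ⟨hh.1 (by simp),
          hh.2 (by simp)⟩)))))
      have P5 := step (insert β Γ) (insert (Fm.neg α) Δ)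
        (Finset.insert_subset hβC hΓ) (Finset.insert_subset hnαC hΔ)
        (Finset.subset_insert _ _) (Finset.subset_insert _ _)
        (fun hh => hco (Or.inr (Or.inr (Or.inr (Or.inr (Or.inl ⟨hh.1 (by simp),
          hh.2 (by simp)⟩))))))
      have P6 := step (insert β Γ) (insert (Fm.neg β) Δ)
        (Finset.insert_subset hβC hΓ) (Finset.insert_subset hnβC hΔ)
        (Finset.subset_insert _ _) (Finset.subset_insert _ _)
        (fun hh => hco (Or.inr (Or.inr (Or.inr (Or.inr (Or.inr ⟨hh.1 (by simp),
          hh.2 (by simp)⟩))))))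
      have := GCp.negOrR P1 P2 P3 P4 P5 P6
      rwa [Finset.insert_eq_self.mpr hm] at this
    -- S15 : neg and on the left
    by_cases h15 : ∀ α β, Fm.neg (Fm.and α β) ∈ Γ →
        (α ∈ Δ ∧ β ∈ Δ) ∨ (Fm.neg α ∈ Γ ∧ α ∈ Δ) ∨ (Fm.neg β ∈ Γ ∧ β ∈ Δ) ∨
        (Fm.neg α ∈ Γ ∧ Fm.neg β ∈ Γ)
    case neg =>
      simp only [not_forall] at h15
      obtain ⟨α, β, h15⟩ := h15
      obtain ⟨hm, hco⟩ := h15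
      obtain ⟨hαC, hβC, hnαC, hnβC⟩ := hC.and (hC.neg (hΓ hm))
      have P1 := step Γ (insert α (insert β Δ)) hΓ
        (Finset.insert_subset hαC (Finset.insert_subset hβC hΔ))
        (Finset.Subset.refl _) (by intro x hx; simp [hx])
        (fun hh => hco (Or.inl ⟨hh.2 (by simp), hh.2 (by simp)⟩))
      have P2 := step (insert (Fm.neg α) Γ) (insert α Δ)
        (Finset.insert_subset hnαC hΓ) (Finset.insert_subset hαC hΔ)
        (Finset.subset_insert _ _) (Finset.subset_insert _ _)
        (fun hh => hco (Or.inr (Or.inl ⟨hh.1 (by simp), hh.2 (by simp)⟩)))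
      have P3 := step (insert (Fm.neg β) Γ) (insert β Δ)
        (Finset.insert_subset hnβC hΓ) (Finset.insert_subset hβC hΔ)
        (Finset.subset_insert _ _) (Finset.subset_insert _ _)
        (fun hh => hco (Or.inr (Or.inr (Or.inl ⟨hh.1 (by simp), hh.2 (by simp)⟩))))
      have P4 := step (insert (Fm.neg α) (insert (Fm.neg β) Γ)) Δ
        (Finset.insert_subset hnαC (Finset.insert_subset hnβC hΓ)) hΔ
        (by intro x hx; simp [hx]) (Finset.Subset.refl _)
        (fun hh => hco (Or.inr (Or.inr (Or.inr ⟨hh.1 (by simp), hh.1 (by simp)⟩))))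
      have := GCp.negAndL P1 P2 P3 P4
      rwa [Finset.insert_eq_self.mpr hm] at this
    -- S16 : neg and on the right
    by_cases h16 : ∀ α β, Fm.neg (Fm.and α β) ∈ Δ →
        (α ∈ Γ ∧ β ∈ Γ ∧ Fm.neg α ∈ Δ) ∨ (α ∈ Γ ∧ β ∈ Γ ∧ Fm.neg β ∈ Δ)
    case neg =>
      simp only [not_forall] at h16
      obtain ⟨α, β, h16⟩ := h16
      obtain ⟨hm, hco⟩ := h16
      obtain ⟨hαC, hβC, hnαC, hnβC⟩ := hC.and (hC.neg (hΔ hm))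
      have P1 := step (insert α (insert β Γ)) (insert (Fm.neg α) Δ)
        (Finset.insert_subset hαC (Finset.insert_subset hβC hΓ))
        (Finset.insert_subset hnαC hΔ)
        (by intro x hx; simp [hx]) (Finset.subset_insert _ _)
        (fun hh => hco (Or.inl ⟨hh.1 (by simp), hh.1 (by simp), hh.2 (by simp)⟩))
      have P2 := step (insert α (insert β Γ)) (insert (Fm.neg β) Δ)
        (Finset.insert_subset hαC (Finset.insert_subset hβC hΓ))
        (Finset.insert_subset hnβC hΔ)
        (by intro x hx; simp [hx]) (Finset.subset_insert _ _)
        (fun hh => hco (Or.inr ⟨hh.1 (by simp), hh.1 (by simp), hh.2 (by simp)⟩))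
      have := GCp.negAndR P1 P2
      rwa [Finset.insert_eq_self.mpr hm] at this
    -- S17 : neg imp on the left
    by_cases h17 : ∀ α β, Fm.neg (Fm.imp α β) ∈ Γ →
        (α ∈ Γ ∧ Fm.neg β ∈ Γ ∧ β ∈ Δ) ∨ (α ∈ Γ ∧ Fm.neg α ∈ Γ ∧ Fm.neg β ∈ Γ)
    case neg =>
      simp only [not_forall] at h17
      obtain ⟨α, β, h17⟩ := h17
      obtain ⟨hm, hco⟩ := h17
      obtain ⟨hαC, hβC, hnαC, hnβC⟩ := hC.imp (hC.neg (hΓ hm))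
      have P1 := step (insert α (insert (Fm.neg β) Γ)) (insert β Δ)
        (Finset.insert_subset hαC (Finset.insert_subset hnβC hΓ))
        (Finset.insert_subset hβC hΔ)
        (by intro x hx; simp [hx]) (Finset.subset_insert _ _)
        (fun hh => hco (Or.inl ⟨hh.1 (by simp), hh.1 (by simp), hh.2 (by simp)⟩))
      have P2 := step (insert α (insert (Fm.neg α) (insert (Fm.neg β) Γ))) Δ
        (Finset.insert_subset hαC (Finset.insert_subset hnαC
          (Finset.insert_subset hnβC hΓ))) hΔ
        (by intro x hx; simp [hx]) (Finset.Subset.refl _)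
        (fun hh => hco (Or.inr ⟨hh.1 (by simp), hh.1 (by simp), hh.1 (by simp)⟩))
      have := GCp.negImpL P1 P2
      rwa [Finset.insert_eq_self.mpr hm] at this
    -- S18 : neg imp on the right
    by_cases h18 : ∀ α β, Fm.neg (Fm.imp α β) ∈ Δ →
        α ∈ Δ ∨ (β ∈ Γ ∧ Fm.neg α ∈ Δ) ∨ (β ∈ Γ ∧ Fm.neg β ∈ Δ)
    case neg =>
      simp only [not_forall] at h18
      obtain ⟨α, β, h18⟩ := h18
      obtain ⟨hm, hco⟩ := h18
      obtain ⟨hαC, hβC, hnαC, hnβC⟩ := hC.imp (hC.neg (hΔ hm))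
      have P1 := step Γ (insert α Δ) hΓ (Finset.insert_subset hαC hΔ)
        (Finset.Subset.refl _) (Finset.subset_insert _ _)
        (fun hh => hco (Or.inl (hh.2 (by simp))))
      have P2 := step (insert β Γ) (insert (Fm.neg α) Δ)
        (Finset.insert_subset hβC hΓ) (Finset.insert_subset hnαC hΔ)
        (Finset.subset_insert _ _) (Finset.subset_insert _ _)
        (fun hh => hco (Or.inr (Or.inl ⟨hh.1 (by simp), hh.2 (by simp)⟩)))
      have P3 := step (insert β Γ) (insert (Fm.neg β) Δ)
        (Finset.insert_subset hβC hΓ) (Finset.insert_subset hnβC hΔ)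
        (Finset.subset_insert _ _) (Finset.subset_insert _ _)
        (fun hh => hco (Or.inr (Or.inr ⟨hh.1 (by simp), hh.2 (by simp)⟩)))
      have := GCp.negImpR P1 P2 P3
      rwa [Finset.insert_eq_self.mpr hm] at this
    -- saturated : countermodel
    exact absurd hv (countermodel (fun a ha hda => hax ⟨a, ha, hda⟩)
      ⟨h1, h2, h3, h4, h5, h6, h7, h8, h9, h10, h11, h12, h13, h14, h15, h16, h17, h18⟩)

/-- Cut-free completeness of GCiore′ with respect to M_e. -/
theorem gciore'_cutfree_complete (Γ Δ : Finset Fm) :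
    ValidSeqP Γ Δ → GCp false Γ Δ := by
  intro hv
  exact main_lemma (clC (Γ ∪ Δ)) (closed_clC (Γ ∪ Δ))
    ((clC (Γ ∪ Δ) \ Γ).card + (clC (Γ ∪ Δ) \ Δ).card + 1) Γ Δ
    (Nat.lt_succ_self _)
    ((Finset.subset_union_left).trans (subset_clC _))
    ((Finset.subset_union_right).trans (subset_clC _)) hv
end

section
/- Generalized subformula property: if D is a cut-free derivation of Γ⇒Δ in GCiore, then for every sequent Π⇒Λ occurring in D, every formula of Π∪Λ is a generalized subformula of some formula of Γ∪Δ. -/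
/-- Generalized subformulas: `Gsub a γ` means a ∈ gsub(γ). -/
inductive Gsub : Fm → Fm → Prop
  | refl (α : Fm) : Gsub α α
  | neg : Gsub a α → Gsub a (Fm.neg α)
  | andl : Gsub a α → Gsub a (Fm.and α β)
  | andr : Gsub a β → Gsub a (Fm.and α β)
  | orl : Gsub a α → Gsub a (Fm.or α β)
  | orr : Gsub a β → Gsub a (Fm.or α β)
  | impl : Gsub a α → Gsub a (Fm.imp α β)
  | impr : Gsub a β → Gsub a (Fm.imp α β)
  | negAndl : Gsub a (Fm.neg α) → Gsub a (Fm.neg (Fm.and α β))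
  | negAndr : Gsub a (Fm.neg β) → Gsub a (Fm.neg (Fm.and α β))
  | negOrl : Gsub a (Fm.neg α) → Gsub a (Fm.neg (Fm.or α β))
  | negOrr : Gsub a (Fm.neg β) → Gsub a (Fm.neg (Fm.or α β))
  | negImpl : Gsub a (Fm.neg α) → Gsub a (Fm.neg (Fm.imp α β))
  | negImpr : Gsub a (Fm.neg β) → Gsub a (Fm.neg (Fm.imp α β))
  | cons : Gsub a (Fm.neg α) → Gsub a (Fm.cons α)

/-- The (cut-free) rules of GCiore as a relation between a conclusion sequent
and the list of its premise sequents. -/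
inductive Rule : Finset Fm → Finset Fm → List (Finset Fm × Finset Fm) → Prop
  | ax (α : Fm) : Rule {α} {α} []
  | wL (α : Fm) (Γ Δ : Finset Fm) : Rule (insert α Γ) Δ [(Γ, Δ)]
  | wR (α : Fm) (Γ Δ : Finset Fm) : Rule Γ (insert α Δ) [(Γ, Δ)]
  | orL : Rule (insert (Fm.or α β) Γ) Δ [(insert α Γ, Δ), (insert β Γ, Δ)]
  | orR : Rule Γ (insert (Fm.or α β) Δ) [(Γ, insert α (insert β Δ))]
  | negOrL : Rule (insert (Fm.neg (Fm.or α β)) Γ) Δ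
      [(insert α (insert (Fm.neg α) (insert β (insert (Fm.neg β) Γ))), Δ),
       (insert (Fm.neg α) (insert (Fm.neg β) Γ), insert α (insert β Δ))]
  | negOrR : Rule Γ (insert (Fm.neg (Fm.or α β)) Δ)
      [(Γ, insert α Δ), (Γ, insert (Fm.neg α) Δ), (Γ, insert β Δ), (Γ, insert (Fm.neg β) Δ)]
  | andL : Rule (insert (Fm.and α β) Γ) Δ [(insert α (insert β Γ), Δ)]
  | andR : Rule Γ (insert (Fm.and α β) Δ) [(Γ, insert α Δ), (Γ, insert β Δ)]
  | negAndL : Rule (insert (Fm.neg (Fm.and α β)) Γ) Δ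
      [(Γ, insert α (insert β Δ)),
       (insert (Fm.neg α) Γ, insert α Δ),
       (insert (Fm.neg β) Γ, insert β Δ),
       (insert (Fm.neg α) (insert (Fm.neg β) Γ), Δ)]
  | negAndR : Rule Γ (insert (Fm.neg (Fm.and α β)) Δ)
      [(Γ, insert α Δ), (Γ, insert (Fm.neg α) Δ), (Γ, insert β Δ), (Γ, insert (Fm.neg β) Δ)]
  | impL : Rule (insert (Fm.imp α β) Γ) Δ [(Γ, insert α Δ), (insert β Γ, Δ)]
  | impR : Rule Γ (insert (Fm.imp α β) Δ) [(insert α Γ, insert β Δ)]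
  | negImpL : Rule (insert (Fm.neg (Fm.imp α β)) Γ) Δ
      [(insert α (insert (Fm.neg β) Γ), insert β Δ),
       (insert α (insert (Fm.neg α) (insert (Fm.neg β) Γ)), Δ)]
  | negImpR : Rule Γ (insert (Fm.neg (Fm.imp α β)) Δ)
      [(Γ, insert α Δ), (Γ, insert (Fm.neg α) Δ), (Γ, insert β Δ), (Γ, insert (Fm.neg β) Δ)]
  | negR : Rule Γ (insert (Fm.neg α) Δ) [(insert α Γ, Δ)]
  | negNegL : Rule (insert (Fm.neg (Fm.neg α)) Γ) Δ [(insert α Γ, Δ)]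
  | negNegR : Rule Γ (insert (Fm.neg (Fm.neg α)) Δ) [(Γ, insert α Δ)]
  | consL : Rule (insert (Fm.cons α) Γ) Δ [(Γ, insert α Δ), (Γ, insert (Fm.neg α) Δ)]
  | consR : Rule Γ (insert (Fm.cons α) Δ) [(insert α (insert (Fm.neg α) Γ), Δ)]
  | negConsL : Rule (insert (Fm.neg (Fm.cons α)) Γ) Δ [(insert α (insert (Fm.neg α) Γ), Δ)]

/-- Derivation trees: each node carries a sequent. -/
inductive DTree : Type
  | node : Finset Fm → Finset Fm → List DTree → DTree

def DTree.root : DTree → Finset Fm × Finset Fm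
  | DTree.node Γ Δ _ => (Γ, Δ)

/-- A tree is a correct (cut-free) GCiore derivation. -/
inductive Correct : DTree → Prop
  | mk {Γ Δ : Finset Fm} {ts : List DTree} :
      Rule Γ Δ (ts.map DTree.root) → (∀ t ∈ ts, Correct t) → Correct (DTree.node Γ Δ ts)

/-- A sequent occurs in a derivation tree. -/
inductive Occurs : DTree → Finset Fm → Finset Fm → Prop
  | here {Γ Δ : Finset Fm} {ts : List DTree} : Occurs (DTree.node Γ Δ ts) Γ Δ
  | up {Γ Δ Θ Λ : Finset Fm} {ts : List DTree} {t : DTree} :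
      t ∈ ts → Occurs t Θ Λ → Occurs (DTree.node Γ Δ ts) Θ Λ

lemma gsub_trans {a b c : Fm} (h1 : Gsub a b) (h2 : Gsub b c) : Gsub a c := by
  induction h2 with
  | refl => exact h1
  | neg _ ih => exact Gsub.neg ih
  | andl _ ih => exact Gsub.andl ih
  | andr _ ih => exact Gsub.andr ih
  | orl _ ih => exact Gsub.orl ih
  | orr _ ih => exact Gsub.orr ih
  | impl _ ih => exact Gsub.impl ih
  | impr _ ih => exact Gsub.impr ih
  | negAndl _ ih => exact Gsub.negAndl ih
  | negAndr _ ih => exact Gsub.negAndr ih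
  | negOrl _ ih => exact Gsub.negOrl ih
  | negOrr _ ih => exact Gsub.negOrr ih
  | negImpl _ ih => exact Gsub.negImpl ih
  | negImpr _ ih => exact Gsub.negImpr ih
  | cons _ ih => exact Gsub.cons ih

lemma rule_step {Γ Δ Θ Λ : Finset Fm} {ps : List (Finset Fm × Finset Fm)}
    (h : Rule Γ Δ ps) (hm : (Θ, Λ) ∈ ps) :
    ∀ φ ∈ Θ ∪ Λ, ∃ ψ ∈ Γ ∪ Δ, Gsub φ ψ := by
  cases h
  all_goals fin_cases hm
  all_goals intro φ hφ
  all_goals simp only [Finset.mem_union, Finset.mem_insert] at hφ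
  all_goals repeat' (first | (rcases hφ with rfl | hφ) | (rcases hφ with hφ | hφ))
  all_goals
    first
      | exact ⟨_, Finset.mem_union_left _ hφ, Gsub.refl _⟩
      | exact ⟨_, Finset.mem_union_right _ hφ, Gsub.refl _⟩
      | exact ⟨_, Finset.mem_union_left _ (Finset.mem_insert_of_mem hφ), Gsub.refl _⟩
      | exact ⟨_, Finset.mem_union_right _ (Finset.mem_insert_of_mem hφ), Gsub.refl _⟩
      | exact ⟨_, Finset.mem_union_left _ (Finset.mem_insert_self _ _), by
          solve_by_elim [Gsub.refl, Gsub.neg, Gsub.andl, Gsub.andr, Gsub.orl, Gsub.orr,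
            Gsub.impl, Gsub.impr, Gsub.negAndl, Gsub.negAndr, Gsub.negOrl, Gsub.negOrr,
            Gsub.negImpl, Gsub.negImpr, Gsub.cons]⟩
      | exact ⟨_, Finset.mem_union_right _ (Finset.mem_insert_self _ _), by
          solve_by_elim [Gsub.refl, Gsub.neg, Gsub.andl, Gsub.andr, Gsub.orl, Gsub.orr,
            Gsub.impl, Gsub.impr, Gsub.negAndl, Gsub.negAndr, Gsub.negOrl, Gsub.negOrr,
            Gsub.negImpl, Gsub.negImpr, Gsub.cons]⟩

lemma main_aux : ∀ (d : DTree) (Θ Λ : Finset Fm), Occurs d Θ Λ → Correct d →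
    ∀ φ ∈ Θ ∪ Λ, ∃ ψ ∈ d.root.1 ∪ d.root.2, Gsub φ ψ := by
  intro d Θ Λ hocc
  induction hocc with
  | here =>
    intro _ φ hφ
    exact ⟨φ, hφ, Gsub.refl φ⟩
  | @up Γ Δ Θ Λ ts t ht _ ih =>
    intro hd φ hφ
    cases hd with
    | mk hr hts =>
      obtain ⟨ψ, hψ, hg⟩ := ih (hts t ht) φ hφ
      have hmem : (t.root.1, t.root.2) ∈ ts.map DTree.root := by
        simpa using List.mem_map_of_mem (f := DTree.root) ht
      obtain ⟨χ, hχ, hg2⟩ := rule_step hr hmem ψ hψ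
      exact ⟨χ, hχ, gsub_trans hg hg2⟩

/-- Generalized subformula property for cut-free GCiore derivations. -/
theorem gciore_gsub_property (d : DTree) (Γ Δ : Finset Fm)
    (hd : Correct d) (hroot : d.root = (Γ, Δ)) :
    ∀ Θ Λ : Finset Fm, Occurs d Θ Λ →
      ∀ φ ∈ Θ ∪ Λ, ∃ ψ ∈ Γ ∪ Δ, Gsub φ ψ := by
  intro Θ Λ hocc φ hφ
  obtain ⟨ψ, hψ, hg⟩ := main_aux d Θ Λ hocc hd φ hφ
  rw [hroot] at hψ
  exact ⟨ψ, hψ, hg⟩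
end

section
/- For every formula α, the sequent ⇒ α∧¬α (empty antecedent, succedent {α∧¬α}) is provable in GCiore if and only if the empty sequent ⇒ (empty antecedent and empty succedent) is provable in GCiore. -/
section Sound

def ev (v : ℕ → V3) : Fm → V3
  | .var n => v n
  | .and a b => vand (ev v a) (ev v b)
  | .or a b => vor (ev v a) (ev v b)
  | .imp a b => vimp (ev v a) (ev v b)
  | .neg a => vneg (ev v a)
  | .cons a => vcons (ev v a)

def holds (v : ℕ → V3) (Γ Δ : Finset Fm) : Prop :=
  (∀ γ ∈ Γ, Des (ev v γ)) → ∃ δ ∈ Δ, Des (ev v δ)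

set_option maxHeartbeats 2000000 in
theorem gc_sound {c : Bool} {Γ Δ : Finset Fm} (h : GC c Γ Δ) (v : ℕ → V3) :
    holds v Γ Δ := by
  induction h with
    | ax c α =>
      exact fun h => ⟨α, Finset.mem_singleton_self α, h α (Finset.mem_singleton_self α)⟩
    | @wL c Γ Δ α h ih =>
      simp only [holds, Finset.forall_mem_insert, Finset.exists_mem_insert,
        Finset.mem_singleton, ev] at *
      tauto
    | @wR c Γ Δ α h ih =>
      simp only [holds, Finset.forall_mem_insert, Finset.exists_mem_insert,
        Finset.mem_singleton, ev] at *
      tauto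
    | @orL c α Γ Δ β h1 h2 ih1 ih2 =>
      simp only [holds, Finset.forall_mem_insert, Finset.exists_mem_insert,
        Finset.mem_singleton, ev] at *
      rcases ha : ev v α <;> rcases hb : ev v β <;> (try simp_all [Des, vneg, vand, vor, vimp, vcons]) <;> tauto
    | @orR c Γ α β Δ h ih =>
      simp only [holds, Finset.forall_mem_insert, Finset.exists_mem_insert,
        Finset.mem_singleton, ev] at *
      rcases ha : ev v α <;> rcases hb : ev v β <;> (try simp_all [Des, vneg, vand, vor, vimp, vcons]) <;> tauto
    | @negOrL c α β Γ Δ h1 h2 ih1 ih2 =>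
      simp only [holds, Finset.forall_mem_insert, Finset.exists_mem_insert,
        Finset.mem_singleton, ev] at *
      rcases ha : ev v α <;> rcases hb : ev v β <;> (try simp_all [Des, vneg, vand, vor, vimp, vcons]) <;> tauto
    | @negOrR c Γ α Δ β h1 h2 h3 h4 ih1 ih2 ih3 ih4 =>
      simp only [holds, Finset.forall_mem_insert, Finset.exists_mem_insert,
        Finset.mem_singleton, ev] at *
      rcases ha : ev v α <;> rcases hb : ev v β <;> (try simp_all [Des, vneg, vand, vor, vimp, vcons]) <;> tauto
    | @andL c α β Γ Δ h ih =>
      simp only [holds, Finset.forall_mem_insert, Finset.exists_mem_insert,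
        Finset.mem_singleton, ev] at *
      rcases ha : ev v α <;> rcases hb : ev v β <;> (try simp_all [Des, vneg, vand, vor, vimp, vcons]) <;> tauto
    | @andR c Γ α Δ β h1 h2 ih1 ih2 =>
      simp only [holds, Finset.forall_mem_insert, Finset.exists_mem_insert,
        Finset.mem_singleton, ev] at *
      rcases ha : ev v α <;> rcases hb : ev v β <;> (try simp_all [Des, vneg, vand, vor, vimp, vcons]) <;> tauto
    | @negAndL c Γ α β Δ h1 h2 h3 h4 ih1 ih2 ih3 ih4 =>
      simp only [holds, Finset.forall_mem_insert, Finset.exists_mem_insert,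
        Finset.mem_singleton, ev] at *
      rcases ha : ev v α <;> rcases hb : ev v β <;> (try simp_all [Des, vneg, vand, vor, vimp, vcons]) <;> tauto
    | @negAndR c Γ α Δ β h1 h2 h3 h4 ih1 ih2 ih3 ih4 =>
      simp only [holds, Finset.forall_mem_insert, Finset.exists_mem_insert,
        Finset.mem_singleton, ev] at *
      rcases ha : ev v α <;> rcases hb : ev v β <;> (try simp_all [Des, vneg, vand, vor, vimp, vcons]) <;> tauto
    | @impL c Γ α Δ β h1 h2 ih1 ih2 =>
      simp only [holds, Finset.forall_mem_insert, Finset.exists_mem_insert,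
        Finset.mem_singleton, ev] at *
      rcases ha : ev v α <;> rcases hb : ev v β <;> (try simp_all [Des, vneg, vand, vor, vimp, vcons]) <;> tauto
    | @impR c α Γ β Δ h ih =>
      simp only [holds, Finset.forall_mem_insert, Finset.exists_mem_insert,
        Finset.mem_singleton, ev] at *
      rcases ha : ev v α <;> rcases hb : ev v β <;> (try simp_all [Des, vneg, vand, vor, vimp, vcons]) <;> tauto
    | @negImpL c α β Γ Δ h1 h2 ih1 ih2 =>
      simp only [holds, Finset.forall_mem_insert, Finset.exists_mem_insert,
        Finset.mem_singleton, ev] at *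
      rcases ha : ev v α <;> rcases hb : ev v β <;> (try simp_all [Des, vneg, vand, vor, vimp, vcons]) <;> tauto
    | @negImpR c Γ α Δ β h1 h2 h3 h4 ih1 ih2 ih3 ih4 =>
      simp only [holds, Finset.forall_mem_insert, Finset.exists_mem_insert,
        Finset.mem_singleton, ev] at *
      rcases ha : ev v α <;> rcases hb : ev v β <;> (try simp_all [Des, vneg, vand, vor, vimp, vcons]) <;> tauto
    | @negR c α Γ Δ h ih =>
      simp only [holds, Finset.forall_mem_insert, Finset.exists_mem_insert,
        Finset.mem_singleton, ev] at *
      rcases ha : ev v α <;> (try simp_all [Des, vneg, vand, vor, vimp, vcons]) <;> tauto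
    | @negNegL c α Γ Δ h ih =>
      simp only [holds, Finset.forall_mem_insert, Finset.exists_mem_insert,
        Finset.mem_singleton, ev] at *
      rcases ha : ev v α <;> (try simp_all [Des, vneg, vand, vor, vimp, vcons]) <;> tauto
    | @negNegR c Γ α Δ h ih =>
      simp only [holds, Finset.forall_mem_insert, Finset.exists_mem_insert,
        Finset.mem_singleton, ev] at *
      rcases ha : ev v α <;> (try simp_all [Des, vneg, vand, vor, vimp, vcons]) <;> tauto
    | @consL c Γ α Δ h1 h2 ih1 ih2 =>
      simp only [holds, Finset.forall_mem_insert, Finset.exists_mem_insert,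
        Finset.mem_singleton, ev] at *
      rcases ha : ev v α <;> (try simp_all [Des, vneg, vand, vor, vimp, vcons]) <;> tauto
    | @consR c α Γ Δ h ih =>
      simp only [holds, Finset.forall_mem_insert, Finset.exists_mem_insert,
        Finset.mem_singleton, ev] at *
      rcases ha : ev v α <;> (try simp_all [Des, vneg, vand, vor, vimp, vcons]) <;> tauto
    | @negConsL c α Γ Δ h ih =>
      simp only [holds, Finset.forall_mem_insert, Finset.exists_mem_insert,
        Finset.mem_singleton, ev] at *
      rcases ha : ev v α <;> (try simp_all [Des, vneg, vand, vor, vimp, vcons]) <;> tauto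
    | @cut Γ α Δ h1 h2 ih1 ih2 =>
      simp only [holds, Finset.forall_mem_insert, Finset.exists_mem_insert,
        Finset.mem_singleton, ev] at *
      tauto

end Sound
theorem ev_classical (φ : Fm) :
    ev (fun _ => V3.one) φ = V3.zero ∨ ev (fun _ => V3.one) φ = V3.one := by
  induction φ with
  | var n => right; rfl
  | and a b iha ihb => rcases iha with h | h <;> rcases ihb with h' | h' <;>
      simp [ev, h, h', vand]
  | or a b iha ihb => rcases iha with h | h <;> rcases ihb with h' | h' <;>
      simp [ev, h, h', vor]
  | imp a b iha ihb => rcases iha with h | h <;> rcases ihb with h' | h' <;>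
      simp [ev, h, h', vimp]
  | neg a iha => rcases iha with h | h <;> simp [ev, h, vneg]
  | cons a iha => rcases iha with h | h <;> simp [ev, h, vcons]

/-- ⇒ α∧¬α is provable in GCiore iff the empty sequent is provable. -/
theorem gciore_contradiction_iff_empty (α : Fm) :
    GC true ∅ {Fm.and α (Fm.neg α)} ↔ GC true ∅ ∅ := by
  constructor
  · intro h
    exfalso
    have hs := gc_sound h (fun _ => V3.one)
    simp only [holds] at hs
    obtain ⟨δ, hδ, hd⟩ := hs (by simp)
    rw [Finset.mem_singleton] at hδ
    subst hδ
    rcases ev_classical α with ha | ha <;>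
      simp [ev, ha, vand, vneg, Des] at hd
  · intro h
    exact GC.wR _ h
end

section
/- For all formulas α and β and every valuation v into the matrix M_e, the formula ((α∧¬α)∧(β∧¬β)) → ¬(α∨β) takes a designated value (i.e. v(((α∧¬α)∧(β∧¬β))→¬(α∨β)) ∈ {½, 1}); in particular the paraconsistent negation of Ciore satisfies this law even though it does not validate the De Morgan laws. -/
/-- ((α∧¬α)∧(β∧¬β)) → ¬(α∨β) always takes a designated value in M_e. -/
theorem ciore_neg_or_law (α β : Fm) (v : Fm → V3) (hv : IsVal v) :
    Des (v (Fm.imp (Fm.and (Fm.and α (Fm.neg α)) (Fm.and β (Fm.neg β)))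
      (Fm.neg (Fm.or α β)))) := by
  obtain ⟨hand, hor, himp, hneg, hcons⟩ := hv
  simp only [hand, hor, himp, hneg]
  rcases v α <;> rcases v β <;> simp [vand, vor, vimp, vneg, Des]
end
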